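/- arXiv:math/0007159 — 4 statements merged into one kernel-verified Lean document; each statement's English description precedes it below -/
import Mathlib

section
/- Let λ and μ be partitions of n, and let T_λ and T_μ be tableaux of shapes λ and μ, with associated elements t_λ, t_μ ∈ S̃_n and associated permutations s(λ), s(μ) ∈ S_n. Then t_μ t_λ t_μ^{−1} = z^{d(λ)d(μ)} t_λ^{s(μ)}, where d(λ) = |λ| − l(λ) and d(μ) = |μ| − l(μ). -/
inductive SpinGen (n : ℕ) : Type
  | z : SpinGen n
  | t : Fin (n - 1) → SpinGen n

open FreeGroup in
def spinRels (n : ℕ) : Set (FreeGroup (SpinGen n)) :=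
  {w | w = (of SpinGen.z) ^ 2
     ∨ (∃ i : Fin (n - 1), w = (of (SpinGen.t i)) ^ 2 * (of SpinGen.z)⁻¹)
     ∨ (∃ i j : Fin (n - 1), (j : ℕ) = (i : ℕ) + 1 ∧
          w = ((of (SpinGen.t i)) * (of (SpinGen.t j))) ^ 3 * (of SpinGen.z)⁻¹)
     ∨ (∃ i j : Fin (n - 1), (j : ℕ) + 1 < (i : ℕ) ∧
          w = (of (SpinGen.t i)) * (of (SpinGen.t j)) *
              ((of SpinGen.z) * (of (SpinGen.t j)) * (of (SpinGen.t i)))⁻¹)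
     ∨ (∃ i : Fin (n - 1), w = (of SpinGen.z) * (of (SpinGen.t i)) *
              ((of (SpinGen.t i)) * (of SpinGen.z))⁻¹)}

abbrev SpinSym (n : ℕ) : Type := PresentedGroup (spinRels n)

def zEl (n : ℕ) : SpinSym n := PresentedGroup.of SpinGen.z

def tEl {n : ℕ} (i : Fin (n - 1)) : SpinSym n := PresentedGroup.of (SpinGen.t i)

/-- The element `x_i = t_i t_{i+1} ⋯ t_n ⋯ t_{i+1} t_i ∈ S̃_{n+1}`
(zero-based: `i : Fin n` corresponds to the one-based index `i+1`). -/
def xEl {n : ℕ} (i : Fin n) : SpinSym (n + 1) :=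
  (((List.finRange n).drop (i : ℕ)).map (fun j : Fin n => tEl (n := n + 1) j)).prod *
    ((((List.finRange n).drop (i : ℕ)).dropLast.reverse).map
      (fun j : Fin n => tEl (n := n + 1) j)).prod

/-- The cycle `[i_1 i_2 ⋯ i_m] ∈ S̃_{n+1}`: `[i_1] = z`, and for `m > 1`,
`[i_1 ⋯ i_m] = x_{i_1} x_{i_m} x_{i_{m-1}} ⋯ x_{i_2} x_{i_1}`. -/
def cycleEl {n : ℕ} : List (Fin n) → SpinSym (n + 1)
  | [] => 1
  | [_] => zEl (n + 1)
  | a :: b :: rest => xEl a * (((a :: b :: rest).reverse).map xEl).prod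

/-!
Conjugation by any element of `S̃_n` permutes the elements `x_k` up to the central involution
`z`. For a generator, `t_j x_k t_j⁻¹ = z x_{s_j k}` with `s_j = (j j+1)`. For a transposition
`[a b] = x_a x_b x_a` one gets `[a b] x_k [a b]⁻¹ = z x_{(a b) k}`: this is checked for one
adjacent pair, where `[a b] = z t_a`, and transported to every pair by conjugating with words in
the `t_j`, which realize every permutation. Since `[i_1 ⋯ i_m] = z [i_1 i_m] [i_1 ⋯ i_{m-1}]`,
conjugation by this cycle sends `x_k` to `z^{m-1} x_{(i_1 ⋯ i_m) k}`, so conjugation by `t_μ`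
sends `x_k` to `z^{d(μ)} x_{s(μ) k}`. A cycle of `t_λ` of length `m ≥ 2` is a product of `m + 1`
elements `x_k`, hence conjugating `t_λ` by `t_μ` produces `z^{d(μ)(|λ| + l(λ))}`, and
`|λ| + l(λ) ≡ d(λ) (mod 2)`.
-/

section Conjugation

open Equiv

variable {G α : Type*} [Group G] {c : G}

lemma mul_mul_inv_of_mem_center {d : G} (hd : d ∈ Subgroup.center G) (g : G) :
    g * d * g⁻¹ = d :=
  Commute.mul_inv_cancel (Subgroup.mem_center_iff.mp hd g)

lemma prod_map_zpow_mul_of_mem_center (hc : c ∈ Subgroup.center G) (f : α → ℤ) (y : α → G)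
    (L : List α) : (L.map fun i => c ^ f i * y i).prod = c ^ (L.map f).sum * (L.map y).prod := by
  induction L with
  | nil => simp
  | cons i L ih =>
    have hcomm : Commute (y i) (c ^ (L.map f).sum) :=
      Subgroup.mem_center_iff.mp (Subgroup.zpow_mem _ hc _) (y i)
    simp only [List.map_cons, List.prod_cons, List.sum_cons, ih, zpow_add, mul_assoc,
      hcomm.left_comm]

def ConjPermutes (c : G) (x : α → G) (g : G) (e : ℤ) (σ : Perm α) : Prop :=
  ∀ k, g * x k * g⁻¹ = c ^ e * x (σ k)

namespace ConjPermutes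

variable {x : α → G} {g h : G} {e f : ℤ} {σ τ : Perm α}

lemma of_mem_center (hg : g ∈ Subgroup.center G) : ConjPermutes c x g 0 1 := fun k => by
  rw [Commute.mul_inv_cancel (Commute.symm (Subgroup.mem_center_iff.mp hg (x k))), zpow_zero,
    one_mul, Perm.one_apply]

lemma mul (hc : c ∈ Subgroup.center G) (hg : ConjPermutes c x g e σ)
    (hh : ConjPermutes c x h f τ) : ConjPermutes c x (g * h) (e + f) (σ * τ) := fun k => by
  calc g * h * x k * (g * h)⁻¹ = g * (h * x k * h⁻¹) * g⁻¹ := by group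
    _ = (g * c ^ f * g⁻¹) * (g * x (τ k) * g⁻¹) := by rw [hh]; group
    _ = c ^ (e + f) * x ((σ * τ) k) := by
      rw [mul_mul_inv_of_mem_center (Subgroup.zpow_mem _ hc f), hg, Perm.mul_apply, ← mul_assoc,
        ← zpow_add, add_comm]

lemma inv (hc : c ∈ Subgroup.center G) (hg : ConjPermutes c x g e σ) :
    ConjPermutes c x g⁻¹ (-e) σ⁻¹ := fun k => by
  have hxk : x k = c ^ (-e) * (g * x (σ⁻¹ k) * g⁻¹) := by
    rw [hg]
    simp
  calc g⁻¹ * x k * g⁻¹⁻¹ = (g⁻¹ * c ^ (-e) * g⁻¹⁻¹) * x (σ⁻¹ k) := by rw [hxk]; group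
    _ = c ^ (-e) * x (σ⁻¹ k) := by rw [mul_mul_inv_of_mem_center (Subgroup.zpow_mem _ hc _)]

lemma conj (hc : c ∈ Subgroup.center G) (hg : ConjPermutes c x g e σ)
    (hh : ConjPermutes c x h f τ) : ConjPermutes c x (h * g * h⁻¹) e (τ * σ * τ⁻¹) := by
  simpa using (hh.mul hc hg).mul hc (hh.inv hc)

lemma list_prod (hc : c ∈ Subgroup.center G) {ι : Type*} {g : ι → G} {e : ι → ℤ}
    {σ : ι → Perm α} (L : List ι) (hL : ∀ i ∈ L, ConjPermutes c x (g i) (e i) (σ i)) :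
    ConjPermutes c x (L.map g).prod (L.map e).sum (L.map σ).prod := by
  induction L with
  | nil => exact of_mem_center (Subgroup.one_mem _)
  | cons i L ih =>
    simp only [List.map_cons, List.prod_cons, List.sum_cons]
    exact (hL i List.mem_cons_self).mul hc (ih fun j hj => hL j (List.mem_cons_of_mem i hj))

lemma conj_prod_map (hc : c ∈ Subgroup.center G) (hg : ConjPermutes c x g e σ) (L : List α) :
    g * (L.map x).prod * g⁻¹ = c ^ (e * L.length) * (L.map (x ∘ σ)).prod := by
  rw [← MulAut.conj_apply, map_list_prod, List.map_map]
  have hconj : ⇑(MulAut.conj g) ∘ x = fun k => c ^ e * (x ∘ σ) k := funext fun k => hg k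
  rw [hconj, prod_map_zpow_mul_of_mem_center hc, List.map_const', List.sum_replicate,
    nsmul_eq_mul, mul_comm]

end ConjPermutes

end Conjugation

lemma Equiv.Perm.exists_apply_eq_and_apply_eq {α : Type*} [DecidableEq α] {a₀ b₀ a b : α}
    (h₀ : a₀ ≠ b₀) (h : a ≠ b) : ∃ σ : Perm α, σ a₀ = a ∧ σ b₀ = b := by
  set c := swap a₀ a b₀
  have hca : c ≠ a := fun hc =>
    h₀ ((swap a₀ a).injective ((swap_apply_left a₀ a).trans hc.symm))
  exact ⟨swap c b * swap a₀ a, by simp [swap_apply_of_ne_of_ne hca.symm h], by simp [c]⟩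

lemma List.formPerm_cons_concat {α : Type*} [DecidableEq α] {a d : α} {l : List α}
    (h : (a :: (l ++ [d])).Nodup) :
    (a :: (l ++ [d])).formPerm = Equiv.swap a d * (a :: l).formPerm := by
  have hrot : (a :: (l ++ [d])) ~r (d :: a :: l) := IsRotated.symm ⟨1, by simp⟩
  rw [formPerm_eq_of_isRotated h hrot, formPerm_cons_cons, Equiv.swap_comm]

section Relations

variable {n : ℕ}

lemma zEl_sq (n : ℕ) : zEl n ^ 2 = 1 :=
  (map_pow _ _ _).symm.trans
    (PresentedGroup.one_of_mem (x := FreeGroup.of SpinGen.z ^ 2) (Or.inl rfl))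

lemma zEl_zpow_eq_zpow {a b : ℤ} (h : a ≡ b [ZMOD 2]) : zEl n ^ a = zEl n ^ b :=
  zpow_eq_zpow_iff_modEq.mpr
    (h.of_dvd (Int.natCast_dvd_natCast.mpr (orderOf_dvd_of_pow_eq_one (zEl_sq n))))

lemma tEl_sq (i : Fin (n - 1)) : tEl i ^ 2 = zEl n :=
  (map_pow _ _ _).symm.trans
    (PresentedGroup.mk_eq_mk_of_mul_inv_mem (Or.inr (Or.inl ⟨i, rfl⟩)))

lemma tEl_mul_tEl_pow_three {i j : Fin (n - 1)} (h : (j : ℕ) = i + 1) :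
    (tEl i * tEl j) ^ 3 = zEl n :=
  (map_pow _ _ _).symm.trans
    (PresentedGroup.mk_eq_mk_of_mul_inv_mem (Or.inr (Or.inr (Or.inl ⟨i, j, h, rfl⟩))))

lemma tEl_mul_tEl_of_succ_lt {i j : Fin (n - 1)} (h : (j : ℕ) + 1 < i) :
    tEl i * tEl j = zEl n * tEl j * tEl i :=
  PresentedGroup.mk_eq_mk_of_mul_inv_mem (Or.inr (Or.inr (Or.inr (Or.inl ⟨i, j, h, rfl⟩))))

lemma zEl_mul_tEl (i : Fin (n - 1)) : zEl n * tEl i = tEl i * zEl n :=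
  PresentedGroup.mk_eq_mk_of_mul_inv_mem (Or.inr (Or.inr (Or.inr (Or.inr ⟨i, rfl⟩))))

lemma zEl_mem_center (n : ℕ) : zEl n ∈ Subgroup.center (SpinSym n) := by
  refine Subgroup.mem_center_iff.mpr fun g => Subgroup.mem_centralizer_singleton_iff.mp ?_
  refine PresentedGroup.generated_by _ _ (fun j => ?_) g
  rw [Subgroup.mem_centralizer_singleton_iff]
  cases j with
  | z => rfl
  | t i => exact (zEl_mul_tEl i).symm

lemma mul_zEl (g : SpinSym n) : g * zEl n = zEl n * g :=
  Subgroup.mem_center_iff.mp (zEl_mem_center n) g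

lemma mul_zEl_mul (g h : SpinSym n) : g * (zEl n * h) = zEl n * (g * h) := by
  rw [← mul_assoc, mul_zEl, mul_assoc]

lemma zEl_mul_zEl_mul (g : SpinSym n) : zEl n * (zEl n * g) = g := by
  rw [← mul_assoc, ← sq, zEl_sq, one_mul]

lemma tEl_mul_tEl_mul (i : Fin (n - 1)) (g : SpinSym n) : tEl i * (tEl i * g) = zEl n * g := by
  rw [← mul_assoc, ← sq, tEl_sq]

lemma tEl_mul_tEl_of_far {i j : Fin (n - 1)} (h : (i : ℕ) + 1 < j ∨ (j : ℕ) + 1 < i) :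
    tEl i * tEl j = zEl n * (tEl j * tEl i) := by
  rcases h with h | h
  · rw [tEl_mul_tEl_of_succ_lt h, mul_assoc, zEl_mul_zEl_mul]
  · rw [tEl_mul_tEl_of_succ_lt h, mul_assoc]

lemma tEl_braid {i j : Fin (n - 1)} (h : (j : ℕ) = i + 1) :
    tEl i * tEl j * tEl i = tEl j * tEl i * tEl j := by
  have hcube : tEl i * tEl j * tEl i * (tEl j * tEl i * tEl j) = zEl n := by
    rw [← tEl_mul_tEl_pow_three h]; simp only [pow_succ, pow_zero, one_mul, mul_assoc]
  have hsq : tEl j * tEl i * tEl j * (tEl j * tEl i * tEl j) = zEl n := by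
    simp only [mul_assoc, tEl_mul_tEl_mul, mul_zEl_mul, zEl_mul_zEl_mul]
    rw [← sq, tEl_sq]
  exact mul_right_cancel (hcube.trans hsq.symm)

end Relations

section XElements

/-- `tEl` indexes the generators of `S̃_{n+1}` by `Fin (n + 1 - 1)`, which is only defeq to
`Fin n`; `tE` takes the index in `Fin n`. -/
abbrev tE {n : ℕ} (i : Fin n) : SpinSym (n + 1) := tEl (n := n + 1) i

abbrev zE {n : ℕ} : SpinSym (n + 1) := zEl (n + 1)

variable {m : ℕ}

lemma xEl_last : xEl (Fin.last m) = tE (Fin.last m) := by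
  have hdrop : (List.finRange (m + 1)).drop m = [Fin.last m] := by
    rw [List.finRange_succ_last, List.drop_left' (by simp)]
  simp [xEl, hdrop]

lemma xEl_castSucc (i : Fin m) :
    xEl i.castSucc = tE i.castSucc * xEl i.succ * tE i.castSucc := by
  have hdrop : (List.finRange (m + 1)).drop i =
      i.castSucc :: (List.finRange (m + 1)).drop (i + 1) := by
    rw [List.drop_eq_getElem_cons (by simp)]
    simp [Fin.ext_iff]
  have hne : (List.finRange (m + 1)).drop (i + 1) ≠ [] := by simp
  simp [xEl, hdrop, List.dropLast_cons_of_ne_nil hne, mul_assoc]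

lemma xEl_mul_self {n : ℕ} (i : Fin n) : xEl i * xEl i = zEl (n + 1) := by
  obtain ⟨m, rfl⟩ := Nat.exists_eq_add_one_of_ne_zero i.pos.ne'
  induction i using Fin.reverseInduction with
  | last => rw [xEl_last, ← sq, tEl_sq]
  | cast i ih =>
    have ih' (g : SpinSym (m + 2)) : xEl i.succ * (xEl i.succ * g) = zE * g := by
      rw [← mul_assoc, ih]
    rw [xEl_castSucc]
    simp only [mul_assoc, tEl_mul_tEl_mul, mul_zEl_mul, ih', zEl_mul_zEl_mul]
    rw [← sq, tEl_sq]

lemma tE_mul_xEl_of_succ_lt {j i : Fin (m + 1)} (h : (j : ℕ) + 1 < i) :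
    tE j * xEl i = zE * (xEl i * tE j) := by
  induction i using Fin.reverseInduction with
  | last => rw [xEl_last]; exact tEl_mul_tEl_of_far (Or.inl h)
  | cast i ih =>
    have hj (g : SpinSym (m + 2)) :
        tE j * (tE i.castSucc * g) = zE * (tE i.castSucc * (tE j * g)) := by
      rw [← mul_assoc, tEl_mul_tEl_of_far (Or.inl (by simpa using h)), mul_assoc, mul_assoc]
    have ih' (g : SpinSym (m + 2)) :
        tE j * (xEl i.succ * g) = zE * (xEl i.succ * (tE j * g)) := by
      rw [← mul_assoc, ih (Nat.lt_trans h i.castSucc_lt_succ), mul_assoc, mul_assoc]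
    rw [xEl_castSucc]
    simp only [mul_assoc, hj, ih', mul_zEl_mul, zEl_mul_zEl_mul]
    rw [tEl_mul_tEl_of_far (Or.inl (by simpa using h)), mul_zEl_mul, mul_zEl_mul]

lemma tE_castSucc_mul_xEl_castSucc (j : Fin m) :
    tE j.castSucc * xEl j.castSucc = zE * (xEl j.succ * tE j.castSucc) := by
  rw [xEl_castSucc]
  simp only [mul_assoc, tEl_mul_tEl_mul]

lemma tE_castSucc_mul_xEl_succ (j : Fin m) :
    tE j.castSucc * xEl j.succ = zE * (xEl j.castSucc * tE j.castSucc) := by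
  rw [xEl_castSucc, mul_assoc _ (tE _), ← sq, tEl_sq, mul_zEl, zEl_mul_zEl_mul]

lemma tE_mul_xEl_of_lt (j : Fin m) {i : Fin (m + 1)} (h : i < j.castSucc) :
    tE j.castSucc * xEl i = zE * (xEl i * tE j.castSucc) := by
  induction i using Fin.reverseInduction with
  | last => exact absurd h (not_lt.mpr (Fin.le_last _))
  | cast i ih =>
    rw [xEl_castSucc]
    rcases (Fin.castSucc_lt_iff_succ_le.mp h).lt_or_eq with hlt | heq
    · have hij : (i : ℕ) + 1 < j := by simpa [Fin.lt_def] using hlt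
      have hj (g : SpinSym (m + 2)) :
          tE j.castSucc * (tE i.castSucc * g) = zE * (tE i.castSucc * (tE j.castSucc * g)) := by
        rw [← mul_assoc, tEl_mul_tEl_of_far (Or.inr (by simpa using hij)), mul_assoc, mul_assoc]
      have ih' (g : SpinSym (m + 2)) :
          tE j.castSucc * (xEl i.succ * g) = zE * (xEl i.succ * (tE j.castSucc * g)) := by
        rw [← mul_assoc, ih hlt, mul_assoc, mul_assoc]
      simp only [mul_assoc, hj, ih', mul_zEl_mul, zEl_mul_zEl_mul]
      rw [tEl_mul_tEl_of_far (Or.inr (by simpa using hij)), mul_zEl_mul, mul_zEl_mul]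
    · have hval : (j : ℕ) = i + 1 := by simpa [Fin.ext_iff] using heq.symm
      set a := tE i.castSucc
      set b := tE j.castSucc
      set X := xEl j.succ
      have hbraid : a * b * a = b * a * b := tEl_braid (by simpa using hval)
      have haX : a * X = zE * (X * a) := tE_mul_xEl_of_succ_lt (by simp [hval])
      rw [heq, xEl_castSucc]
      calc b * (a * (b * X * b) * a) = b * a * b * X * (b * a) := by simp only [mul_assoc]
        _ = a * b * (a * X) * b * a := by rw [← hbraid]; simp only [mul_assoc]
        _ = zE * (a * b * X * (a * b * a)) := by rw [haX]; simp only [mul_assoc, mul_zEl_mul]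
        _ = zE * (a * (b * X * b) * a * b) := by rw [hbraid]; simp only [mul_assoc]

lemma conjPermutes_tE (j : Fin m) :
    ConjPermutes zE xEl (tE j.castSucc) 1 (Equiv.swap j.castSucc j.succ) := fun i => by
  rw [zpow_one, mul_inv_eq_iff_eq_mul, mul_assoc]
  rcases lt_trichotomy i j.castSucc with h | rfl | h
  · rw [Equiv.swap_apply_of_ne_of_ne h.ne (h.trans j.castSucc_lt_succ).ne]
    exact tE_mul_xEl_of_lt j h
  · rw [Equiv.swap_apply_left]
    exact tE_castSucc_mul_xEl_castSucc j
  · rcases (Fin.castSucc_lt_iff_succ_le.mp h).eq_or_lt with rfl | h'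
    · rw [Equiv.swap_apply_right]
      exact tE_castSucc_mul_xEl_succ j
    · rw [Equiv.swap_apply_of_ne_of_ne h.ne' h'.ne']
      exact tE_mul_xEl_of_succ_lt (by simpa [Fin.lt_def] using h')

end XElements

section Cycles

open Equiv

variable {n : ℕ}

lemma cycleEl_cons_cons (a b : Fin n) (rest : List (Fin n)) :
    cycleEl (a :: b :: rest) = ((a :: (a :: b :: rest).reverse).map xEl).prod := rfl

lemma ConjPermutes.conj_cycleEl {g : SpinSym (n + 1)} {e : ℤ} {σ : Perm (Fin n)}
    (hg : ConjPermutes (zEl (n + 1)) xEl g e σ) {l : List (Fin n)} (hl : l ≠ []) :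
    g * cycleEl l * g⁻¹ = zEl (n + 1) ^ (e * (l.length + 1)) * cycleEl (l.map σ) := by
  match l, hl with
  | [a], _ =>
    have heven : e * ([a].length + 1) ≡ 0 [ZMOD 2] :=
      Int.modEq_zero_iff_dvd.mpr ⟨e, by rw [List.length_singleton, Nat.cast_one]; ring⟩
    rw [List.map_singleton, cycleEl, cycleEl, mul_mul_inv_of_mem_center (zEl_mem_center _),
      zEl_zpow_eq_zpow heven, zpow_zero, one_mul]
  | a :: b :: rest, _ =>
    rw [cycleEl_cons_cons, hg.conj_prod_map (zEl_mem_center _)]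
    simp [cycleEl_cons_cons, add_assoc]

lemma exists_conjPermutes (σ : Perm (Fin n)) : ∃ g e, ConjPermutes (zEl (n + 1)) xEl g e σ := by
  cases n with
  | zero => exact ⟨1, 0, Subsingleton.elim σ 1 ▸ ConjPermutes.of_mem_center (one_mem _)⟩
  | succ m =>
    have hσ : σ ∈ Submonoid.closure (Set.range fun i : Fin m => swap i.castSucc i.succ) := by
      rw [Perm.mclosure_swap_castSucc_succ]; trivial
    induction hσ using Submonoid.closure_induction with
    | mem _ h =>
      obtain ⟨j, rfl⟩ := h
      exact ⟨_, _, conjPermutes_tE j⟩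
    | one => exact ⟨1, 0, ConjPermutes.of_mem_center (one_mem _)⟩
    | mul _ _ _ _ ih₁ ih₂ =>
      obtain ⟨g, e, hg⟩ := ih₁
      obtain ⟨h, f, hh⟩ := ih₂
      exact ⟨_, _, hg.mul (zEl_mem_center _) hh⟩

lemma cycleEl_castSucc_last (m : ℕ) :
    cycleEl [(Fin.last m).castSucc, Fin.last (m + 1)] = zE * tE (Fin.last m).castSucc := by
  calc cycleEl [(Fin.last m).castSucc, Fin.last (m + 1)]
      = (tE (Fin.last m).castSucc * tE (Fin.last (m + 1))) ^ 3 * tE (Fin.last m).castSucc := by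
        simp [cycleEl_cons_cons, xEl_castSucc, xEl_last, pow_succ, mul_assoc]
    _ = zE * tE (Fin.last m).castSucc := by rw [tEl_mul_tEl_pow_three (by simp)]

lemma conjPermutes_cycleEl_castSucc_last (m : ℕ) :
    ConjPermutes zE xEl (cycleEl [(Fin.last m).castSucc, Fin.last (m + 1)]) 1
      (swap (Fin.last m).castSucc (Fin.last (m + 1))) := by
  rw [cycleEl_castSucc_last, ← Fin.succ_last]
  simpa using (ConjPermutes.of_mem_center (zEl_mem_center _)).mul (zEl_mem_center _)
    (conjPermutes_tE (Fin.last m))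

lemma ConjPermutes.cycleEl_pair_map {a b : Fin n}
    (hab : ConjPermutes (zEl (n + 1)) xEl (cycleEl [a, b]) 1 (swap a b)) {g : SpinSym (n + 1)}
    {e : ℤ} {σ : Perm (Fin n)} (hg : ConjPermutes (zEl (n + 1)) xEl g e σ) :
    ConjPermutes (zEl (n + 1)) xEl (cycleEl [σ a, σ b]) 1 (swap (σ a) (σ b)) := by
  have hconj : cycleEl [σ a, σ b] = zEl (n + 1) ^ (-(e * 3)) * (g * cycleEl [a, b] * g⁻¹) := by
    rw [hg.conj_cycleEl (List.cons_ne_nil _ _), ← mul_assoc, ← zpow_add]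
    simp
  have h := (ConjPermutes.of_mem_center (Subgroup.zpow_mem _ (zEl_mem_center _) (-(e * 3)))).mul
    (zEl_mem_center _) (hab.conj (zEl_mem_center _) hg)
  rw [zero_add, one_mul] at h
  rwa [hconj, swap_apply_apply]

lemma conjPermutes_cycleEl_pair {a b : Fin n} (hab : a ≠ b) :
    ConjPermutes (zEl (n + 1)) xEl (cycleEl [a, b]) 1 (swap a b) := by
  obtain ⟨m, rfl⟩ : ∃ m, n = m + 2 :=
    Nat.exists_eq_add_of_le' (by have := a.isLt; have := b.isLt; omega)
  obtain ⟨σ, rfl, rfl⟩ :=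
    Perm.exists_apply_eq_and_apply_eq (Fin.castSucc_lt_last (Fin.last m)).ne hab
  obtain ⟨g, e, hg⟩ := exists_conjPermutes σ
  exact (conjPermutes_cycleEl_castSucc_last m).cycleEl_pair_map hg

lemma cycleEl_cons_concat (a d : Fin n) (r : List (Fin n)) :
    cycleEl (a :: (r ++ [d])) = zEl (n + 1) * (cycleEl [a, d] * cycleEl (a :: r)) := by
  cases r with
  | nil =>
    show cycleEl [a, d] = zEl (n + 1) * (cycleEl [a, d] * zEl (n + 1))
    rw [mul_zEl, zEl_mul_zEl_mul]
  | cons b r =>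
    have hx (g : SpinSym (n + 1)) : xEl a * (xEl a * g) = zEl (n + 1) * g := by
      rw [← mul_assoc, xEl_mul_self]
    simp [cycleEl_cons_cons, mul_assoc, hx, mul_zEl_mul, zEl_mul_zEl_mul]

lemma conjPermutes_cycleEl {l : List (Fin n)} (hl : l.Nodup) (hne : l ≠ []) :
    ConjPermutes (zEl (n + 1)) xEl (cycleEl l) (l.length - 1 : ℤ) l.formPerm := by
  obtain ⟨a, r, rfl⟩ := List.exists_cons_of_ne_nil hne
  clear hne
  induction r using List.reverseRecOn with
  | nil => simpa [cycleEl] using ConjPermutes.of_mem_center (zEl_mem_center _)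
  | append_singleton r d ih =>
    have had : a ≠ d := fun had => (List.nodup_cons.mp hl).1 (by simp [had])
    have h := (ConjPermutes.of_mem_center (zEl_mem_center _)).mul (zEl_mem_center _)
      ((conjPermutes_cycleEl_pair had).mul (zEl_mem_center _)
        (ih (hl.sublist (List.cons_sublist_cons.mpr (List.sublist_append_left _ _)))))
    rw [zero_add, one_mul] at h
    rw [cycleEl_cons_concat, List.formPerm_cons_concat hl]
    convert h using 1
    simp only [List.length_cons, List.length_append, List.length_nil]
    push_cast
    ring

lemma conjPermutes_prod_cycleEl {S : List (List (Fin n))} (hS0 : ∀ l ∈ S, l ≠ [])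
    (hS1 : ∀ l ∈ S, l.Nodup) :
    ConjPermutes (zEl (n + 1)) xEl (S.map cycleEl).prod (S.map fun l => (l.length - 1 : ℤ)).sum
      (S.map List.formPerm).prod :=
  ConjPermutes.list_prod (zEl_mem_center _) S fun l hl => conjPermutes_cycleEl (hS1 l hl) (hS0 l hl)

lemma ConjPermutes.conj_prod_cycleEl {g : SpinSym (n + 1)} {e : ℤ} {σ : Perm (Fin n)}
    (hg : ConjPermutes (zEl (n + 1)) xEl g e σ) {T : List (List (Fin n))}
    (hT0 : ∀ l ∈ T, l ≠ []) :
    g * (T.map cycleEl).prod * g⁻¹ =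
      zEl (n + 1) ^ (e * (T.map fun l => (l.length + 1 : ℤ)).sum) *
        (T.map fun l => cycleEl (l.map σ)).prod := by
  rw [← MulAut.conj_apply, map_list_prod, List.map_map, ← List.sum_map_mul_left,
    ← prod_map_zpow_mul_of_mem_center (zEl_mem_center _)]
  exact congrArg List.prod (List.map_congr_left fun l hl => hg.conj_cycleEl (hT0 l hl))

end Cycles

section Tableaux

variable {α : Type*}

lemma List.sum_map_length_sub_one (L : List (List α)) :
    (L.map fun l => (l.length - 1 : ℤ)).sum = (L.map List.length).sum - L.length := by
  induction L with
  | nil => simp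
  | cons l L ih =>
    simp only [List.map_cons, List.sum_cons, ih, List.length_cons]
    push_cast
    ring

lemma List.sum_map_length_add_one (L : List (List α)) :
    (L.map fun l => (l.length + 1 : ℤ)).sum = (L.map List.length).sum + L.length := by
  simp [List.sum_map_add, Function.comp_def]

lemma List.length_le_sum_map_length {L : List (List α)} (hL : ∀ l ∈ L, l ≠ []) :
    L.length ≤ (L.map List.length).sum := by
  simpa using List.length_le_sum_of_one_le (L.map List.length)
    (by simpa [Nat.one_le_iff_ne_zero] using hL)

lemma List.sum_map_length_eq_card [Fintype α] [DecidableEq α] {L : List (List α)}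
    (h1 : L.flatten.Nodup) (h2 : ∀ a, a ∈ L.flatten) :
    (L.map List.length).sum = Fintype.card α := by
  rw [← List.length_flatten, ← List.toFinset_card_of_nodup h1,
    Finset.eq_univ_of_forall fun a => List.mem_toFinset.mpr (h2 a), Finset.card_univ]

end Tableaux

theorem statement_4_general (n : ℕ) (T S : List (List (Fin n)))
    (hT0 : ∀ l ∈ T, l ≠ []) (hT1 : T.flatten.Nodup) (hT2 : ∀ a : Fin n, a ∈ T.flatten)
    (hS0 : ∀ l ∈ S, l ≠ []) (hS1 : S.flatten.Nodup) (hS2 : ∀ a : Fin n, a ∈ S.flatten) :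
    (S.map cycleEl).prod * (T.map cycleEl).prod * ((S.map cycleEl).prod)⁻¹ =
      zEl (n + 1) ^ ((n - T.length) * (n - S.length)) *
        (T.map (fun row => cycleEl (row.map ((S.map List.formPerm).prod : Equiv.Perm (Fin n))))).prod := by
  have hconj := conjPermutes_prod_cycleEl hS0 (List.nodup_flatten.mp hS1).1
  rw [hconj.conj_prod_cycleEl hT0]
  congr 1
  have hTn := List.sum_map_length_eq_card hT1 hT2
  have hSn := List.sum_map_length_eq_card hS1 hS2
  have hTle := List.length_le_sum_map_length hT0
  have hSle := List.length_le_sum_map_length hS0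
  rw [Fintype.card_fin] at hTn hSn
  rw [← zpow_natCast, List.sum_map_length_sub_one, List.sum_map_length_add_one, hTn, hSn]
  apply zEl_zpow_eq_zpow
  push_cast [hTn ▸ hTle, hSn ▸ hSle]
  exact Int.modEq_iff_dvd.mpr ⟨-(T.length * (n - S.length)), by ring⟩

/-- `statement_4`: for tableaux `T_λ, T_μ` of partition shapes `λ, μ` of `n` (encoded as
lists of rows, the rows being nonempty lists of distinct elements which together enumerate
`Fin n = {1, …, n}`, with weakly decreasing row lengths), the associated elements
`t_λ = ∏ rows [a_{i1} ⋯ a_{iλ_i}]`, `t_μ` of `S̃_n ⊂ S̃_{n+1}` satisfy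
`t_μ t_λ t_μ⁻¹ = z^{d(λ)d(μ)} t_λ^{s(μ)}`, where `s(μ) ∈ S_n` is the permutation
associated with `T_μ`, `t_λ^{s} = ∏ rows [s(a_{i1}) ⋯ s(a_{iλ_i})]`, and
`d(λ) = |λ| − l(λ)`. -/
theorem statement_4 (n : ℕ) (T S : List (List (Fin n)))
    (hT0 : ∀ l ∈ T, l ≠ []) (hT1 : T.flatten.Nodup) (hT2 : ∀ a : Fin n, a ∈ T.flatten)
    (hTshape : (T.map List.length).Pairwise (· ≥ ·))
    (hS0 : ∀ l ∈ S, l ≠ []) (hS1 : S.flatten.Nodup) (hS2 : ∀ a : Fin n, a ∈ S.flatten)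
    (hSshape : (S.map List.length).Pairwise (· ≥ ·)) :
    (S.map cycleEl).prod * (T.map cycleEl).prod * ((S.map cycleEl).prod)⁻¹ =
      zEl (n + 1) ^ ((n - T.length) * (n - S.length)) *
        (T.map (fun row => cycleEl (row.map ((S.map List.formPerm).prod : Equiv.Perm (Fin n))))).prod :=
  statement_4_general n T S hT0 hT1 hT2 hS0 hS1 hS2
end

section
/- For every n ≥ 1 there is a (necessarily unique) group homomorphism φ : S̃_n → C_{n−1}^× from the spin symmetric group to the group of units of the complex Clifford algebra C_{n−1} such that φ(z) = −1 and φ(t_j) = √((j+1)/(2j))·e_j − √((j−1)/(2j))·e_{j−1} for j = 1, …, n−1, where e_0 = 0 and the square roots are the positive real ones. -/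
/-- The quadratic form `Q(v) = −∑ v_i²` on `ℂ^m`; its Clifford algebra is the complex
Clifford algebra `C_m` with generators `e_1, …, e_m` satisfying
`e_i e_j + e_j e_i = −2δ_{ij}`. -/
noncomputable def cliffQ (m : ℕ) : QuadraticForm ℂ (Fin m → ℂ) :=
  QuadraticMap.weightedSumSquares ℂ (fun _ : Fin m => (-1 : ℂ))

/-- The complex Clifford algebra `C_m`. -/
abbrev CliffC (m : ℕ) : Type := CliffordAlgebra (cliffQ m)

/-- The generator `e_k ∈ C_m` (one-based, `1 ≤ k ≤ m`); by convention `e_k = 0` for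
`k` out of range (in particular `e_0 = 0`). -/
noncomputable def eCl (m : ℕ) (k : ℕ) : CliffC m :=
  if h : 1 ≤ k ∧ k ≤ m then
    CliffordAlgebra.ι (cliffQ m) (Pi.single (⟨k - 1, by omega⟩ : Fin m) 1)
  else 0

lemma cliffQ_single (m : ℕ) (i : Fin m) : cliffQ m (Pi.single i 1) = -1 := by
  simp [cliffQ, QuadraticMap.weightedSumSquares_apply, Pi.single_apply]

lemma eCl_sq (m k : ℕ) (h1 : 1 ≤ k) (h2 : k ≤ m) : eCl m k * eCl m k = -1 := by
  rw [eCl, dif_pos ⟨h1, h2⟩, CliffordAlgebra.ι_sq_scalar, cliffQ_single]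
  simp

lemma single_ortho (m : ℕ) (a b : Fin m) (hne : a ≠ b) :
    (cliffQ m).IsOrtho (Pi.single a 1) (Pi.single b 1) := by
  have hcross : ∀ i : Fin m, (Pi.single a 1 : Fin m → ℂ) i * (Pi.single b 1 : Fin m → ℂ) i = 0 := by
    intro i
    rcases eq_or_ne i a with rfl | hi
    · rw [Pi.single_eq_of_ne hne, mul_zero]
    · rw [Pi.single_eq_of_ne hi, zero_mul]
  rw [QuadraticMap.isOrtho_def]
  simp only [cliffQ, QuadraticMap.weightedSumSquares_apply, Pi.add_apply, neg_smul, one_smul,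
    smul_eq_mul, neg_mul, one_mul, ← Finset.sum_add_distrib]
  apply Finset.sum_congr rfl
  intro i _
  linear_combination (-2 : ℂ) * hcross i

lemma eCl_anti (m k l : ℕ) (h : k ≠ l) : eCl m k * eCl m l + eCl m l * eCl m k = 0 := by
  unfold eCl
  by_cases hk : 1 ≤ k ∧ k ≤ m
  · by_cases hl : 1 ≤ l ∧ l ≤ m
    · rw [dif_pos hk, dif_pos hl]
      exact CliffordAlgebra.ι_mul_ι_add_swap_of_isOrtho
        (single_ortho m _ _ (by simp only [ne_eq, Fin.mk.injEq]; omega))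
    · rw [dif_neg hl]; simp
  · rw [dif_neg hk]; simp
noncomputable def aj (j : ℕ) : ℝ := Real.sqrt (((j:ℝ) + 2) / (2 * ((j:ℝ) + 1)))
noncomputable def bj (j : ℕ) : ℝ := Real.sqrt ((j:ℝ) / (2 * ((j:ℝ) + 1)))

lemma aj_sq (j : ℕ) : aj j ^ 2 = ((j:ℝ) + 2) / (2 * ((j:ℝ) + 1)) :=
  Real.sq_sqrt (by positivity)
lemma bj_sq (j : ℕ) : bj j ^ 2 = (j:ℝ) / (2 * ((j:ℝ) + 1)) :=
  Real.sq_sqrt (by positivity)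
lemma aj_bj_sq (j : ℕ) : aj j ^ 2 + bj j ^ 2 = 1 := by
  rw [aj_sq, bj_sq]
  have : (2 * ((j:ℝ) + 1)) ≠ 0 := by positivity
  field_simp
  ring
lemma aj_mul_bj (j : ℕ) : aj j * bj (j + 1) = 1 / 2 := by
  rw [aj, bj, ← Real.sqrt_mul (by positivity)]
  have h1 : ((j:ℝ) + 1) ≠ 0 := by positivity
  have h2 : ((j:ℝ) + 2) ≠ 0 := by positivity
  have : ((j:ℝ) + 2) / (2 * ((j:ℝ) + 1)) * ((↑(j+1):ℝ) / (2 * ((↑(j+1):ℝ) + 1))) = (1/2)^2 := by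
    push_cast
    field_simp
    ring
  rw [this, Real.sqrt_sq (by norm_num)]
lemma bj_zero : bj 0 = 0 := by simp [bj]

section
variable {R : Type*} [Ring R]
lemma cube_lemma (u v : R) (hu : u * u = -1) (hv : v * v = -1) (huv : u * v + v * u = 1) :
    (u * v) ^ 3 = -1 := by
  have h1 : v * u = 1 - u * v := by rw [← huv]; noncomm_ring
  have h2 : (u * v) * (u * v) = u * v - 1 := by
    calc (u * v) * (u * v) = u * (v * u) * v := by noncomm_ring
    _ = u * (1 - u * v) * v := by rw [h1]
    _ = u * v - (u * u) * (v * v) := by noncomm_ring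
    _ = u * v - 1 := by rw [hu, hv]; noncomm_ring
  calc (u * v) ^ 3 = ((u * v) * (u * v)) * (u * v) := by noncomm_ring
  _ = (u * v - 1) * (u * v) := by rw [h2]
  _ = ((u * v) * (u * v)) - u * v := by noncomm_ring
  _ = -1 := by rw [h2]; noncomm_ring
end

noncomputable def Tc (m j : ℕ) : CliffC m :=
  ((aj j : ℝ) : ℂ) • eCl m (j + 1) - ((bj j : ℝ) : ℂ) • eCl m j

lemma expand_lemma (m : ℕ) (a b c d : ℂ) (e1 f1 e2 f2 : CliffC m) :
    (a • e1 - b • f1) * (c • e2 - d • f2) + (c • e2 - d • f2) * (a • e1 - b • f1)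
      = (a*c) • (e1*e2 + e2*e1) + (b*d) • (f1*f2 + f2*f1)
        - (a*d) • (e1*f2 + f2*e1) - (b*c) • (f1*e2 + e2*f1) := by
  simp only [sub_mul, mul_sub, smul_mul_assoc, mul_smul_comm, smul_smul, smul_add, smul_sub]
  module

lemma expand_sq (m : ℕ) (a b : ℂ) (e f : CliffC m) :
    (a • e - b • f) * (a • e - b • f)
      = (a*a) • (e*e) + (b*b) • (f*f) - (a*b) • (e*f + f*e) := by
  simp only [sub_mul, mul_sub, smul_mul_assoc, mul_smul_comm, smul_smul, smul_add, smul_sub]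
  module

lemma Tc_sq (m j : ℕ) (hj : j + 1 ≤ m) : Tc m j * Tc m j = -1 := by
  have he := eCl_sq m (j+1) (by omega) hj
  have hef := eCl_anti m (j+1) j (by omega)
  have hff : (((bj j : ℝ) : ℂ) * ((bj j : ℝ) : ℂ)) • (eCl m j * eCl m j)
      = (((bj j : ℝ) : ℂ) * ((bj j : ℝ) : ℂ)) • (-1 : CliffC m) := by
    rcases Nat.eq_zero_or_pos j with rfl | hpos
    · simp [bj_zero]
    · rw [eCl_sq m j hpos (by omega)]
  have hsum : ((aj j : ℝ) : ℂ) * ((aj j : ℝ) : ℂ) + ((bj j : ℝ) : ℂ) * ((bj j : ℝ) : ℂ) = 1 := by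
    have h := aj_bj_sq j
    have h2 : ((aj j ^ 2 + bj j ^ 2 : ℝ) : ℂ) = 1 := by rw [h]; norm_num
    push_cast at h2
    linear_combination h2
  rw [Tc, expand_sq, he, hff, hef, smul_zero, sub_zero, smul_neg, smul_neg, ← neg_add,
    ← add_smul, hsum, one_smul]

lemma Tc_far (m i j : ℕ) (hij : j + 1 < i) :
    Tc m i * Tc m j + Tc m j * Tc m i = 0 := by
  rw [Tc, Tc, expand_lemma, eCl_anti m (i+1) (j+1) (by omega), eCl_anti m i j (by omega),
    eCl_anti m (i+1) j (by omega), eCl_anti m i (j+1) (by omega)]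
  simp

lemma Tc_adj (m i : ℕ) (hi : i + 2 ≤ m) :
    Tc m i * Tc m (i+1) + Tc m (i+1) * Tc m i = 1 := by
  have had : ((aj i : ℝ) : ℂ) * ((bj (i+1) : ℝ) : ℂ) = 1/2 := by
    have h := aj_mul_bj i
    have h2 : ((aj i * bj (i+1) : ℝ) : ℂ) = ((1/2 : ℝ) : ℂ) := by rw [h]
    push_cast at h2
    linear_combination h2
  have hsq : eCl m (i+1) * eCl m (i+1) + eCl m (i+1) * eCl m (i+1) = -2 := by
    rw [eCl_sq m (i+1) (by omega) (by omega)]; norm_num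
  rw [Tc, Tc, expand_lemma, eCl_anti m (i+1) (i+1+1) (by omega), eCl_anti m i (i+1) (by omega),
    eCl_anti m i (i+1+1) (by omega)]
  rw [hsq, had]
  simp only [smul_zero, zero_add, sub_zero, zero_sub, smul_neg, neg_neg]
  rw [show (2:CliffC m) = (2:ℂ) • (1:CliffC m) by rw [two_smul]; norm_num, smul_smul]
  norm_num

noncomputable def Tu (m j : ℕ) (hj : j + 1 ≤ m) : (CliffC m)ˣ where
  val := Tc m j
  inv := -Tc m j
  val_inv := by rw [mul_neg, Tc_sq m j hj, neg_neg]
  inv_val := by rw [neg_mul, Tc_sq m j hj, neg_neg]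

lemma Tu_sq (m j : ℕ) (hj : j + 1 ≤ m) : (Tu m j hj) ^ 2 = -1 := by
  apply Units.ext
  rw [Units.val_pow_eq_pow_val, Units.val_neg, Units.val_one, pow_two]
  exact Tc_sq m j hj

lemma Tu_adj (m i : ℕ) (h1 : i + 1 ≤ m) (h2 : i + 2 ≤ m) :
    (Tu m i h1 * Tu m (i+1) h2) ^ 3 = -1 := by
  apply Units.ext
  rw [Units.val_pow_eq_pow_val, Units.val_neg, Units.val_one, Units.val_mul]
  exact cube_lemma _ _ (Tc_sq m i h1) (Tc_sq m (i+1) h2) (Tc_adj m i h2)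

lemma Tu_far (m i j : ℕ) (hij : j + 1 < i) (h1 : i + 1 ≤ m) (h2 : j + 1 ≤ m) :
    Tu m i h1 * Tu m j h2 = -(Tu m j h2 * Tu m i h1) := by
  apply Units.ext
  rw [Units.val_mul, Units.val_neg, Units.val_mul]
  exact eq_neg_of_add_eq_zero_left (Tc_far m i j hij)

noncomputable def fGen (n : ℕ) : SpinGen n → (CliffC (n-1))ˣ
  | SpinGen.z => -1
  | SpinGen.t i => Tu (n-1) i i.isLt

@[simp] lemma fGen_z (n : ℕ) : fGen n SpinGen.z = -1 := rfl
@[simp] lemma fGen_t (n : ℕ) (i : Fin (n-1)) : fGen n (SpinGen.t i) = Tu (n-1) i i.isLt := rfl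

lemma fGen_rels (n : ℕ) : ∀ r ∈ spinRels n, FreeGroup.lift (fGen n) r = 1 := by
  intro r hr
  rcases hr with h | ⟨i, h⟩ | ⟨i, j, hij, h⟩ | ⟨i, j, hij, h⟩ | ⟨i, h⟩ <;> subst h <;>
    simp only [map_mul, map_pow, map_inv, FreeGroup.lift_apply_of, fGen_z, fGen_t]
  · simp
  · rw [Tu_sq]; simp
  · have hj : (j : ℕ) = (i : ℕ) + 1 := hij
    have : Tu (n-1) (j:ℕ) j.isLt = Tu (n-1) ((i:ℕ)+1) (hj ▸ j.isLt) := by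
      congr 1
    rw [this, Tu_adj]; simp
  · rw [Tu_far (n-1) i j hij]
    group
    simp
  · group
    simp [mul_comm]


/-- `statement_10`: for every `n ≥ 1` there is a unique group homomorphism
`φ : S̃_n → C_{n-1}^×` with `φ(z) = −1` and
`φ(t_j) = √((j+1)/(2j))·e_j − √((j−1)/(2j))·e_{j−1}` for `j = 1, …, n−1`
(positive real square roots, `e_0 = 0`). -/
theorem statement_10 (n : ℕ) (hn : 1 ≤ n) :
    ∃ φ : SpinSym n →* (CliffC (n - 1))ˣ,
      (((φ (zEl n) : (CliffC (n - 1))ˣ) : CliffC (n - 1)) = -1) ∧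
      (∀ j : Fin (n - 1),
        ((φ (tEl j) : (CliffC (n - 1))ˣ) : CliffC (n - 1)) =
          ((Real.sqrt ((((j : ℕ) : ℝ) + 2) / (2 * (((j : ℕ) : ℝ) + 1))) : ℂ)) •
              eCl (n - 1) ((j : ℕ) + 1) -
            ((Real.sqrt (((j : ℕ) : ℝ) / (2 * (((j : ℕ) : ℝ) + 1))) : ℂ)) •
              eCl (n - 1) (j : ℕ)) ∧
      ∀ ψ : SpinSym n →* (CliffC (n - 1))ˣ,
        (((ψ (zEl n) : (CliffC (n - 1))ˣ) : CliffC (n - 1)) = -1) →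
        (∀ j : Fin (n - 1),
          ((ψ (tEl j) : (CliffC (n - 1))ˣ) : CliffC (n - 1)) =
            ((Real.sqrt ((((j : ℕ) : ℝ) + 2) / (2 * (((j : ℕ) : ℝ) + 1))) : ℂ)) •
                eCl (n - 1) ((j : ℕ) + 1) -
              ((Real.sqrt (((j : ℕ) : ℝ) / (2 * (((j : ℕ) : ℝ) + 1))) : ℂ)) •
                eCl (n - 1) (j : ℕ)) →
        ψ = φ := by
  refine ⟨PresentedGroup.toGroup (fGen_rels n), ?_, ?_, ?_⟩
  · rw [zEl, PresentedGroup.toGroup.of, fGen_z, Units.val_neg, Units.val_one]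
  · intro j
    rw [tEl, PresentedGroup.toGroup.of, fGen_t]
    rfl
  · intro ψ hz ht
    apply PresentedGroup.ext
    intro x
    cases x with
    | z =>
      rw [PresentedGroup.toGroup.of, fGen_z]
      apply Units.ext
      rw [Units.val_neg, Units.val_one]
      exact hz
    | t i =>
      rw [PresentedGroup.toGroup.of, fGen_t]
      apply Units.ext
      exact (ht i).trans rfl
end

section
/- For every odd integer n ≥ 1, the basic spin representation B_n of S̃_n on (ℂ²)^{⊗(n−1)/2} is an irreducible representation, of dimension 2^{(n−1)/2}. -/
/-- The transposition `(i, i+1)` of `Fin n`, for `i : Fin (n-1)`. -/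
def adjSwap (n : ℕ) (i : Fin (n - 1)) : Equiv.Perm (Fin n) :=
  Equiv.swap ⟨(i : ℕ), by have := i.isLt; omega⟩ ⟨(i : ℕ) + 1, by have := i.isLt; omega⟩

/-- The Pauli matrices `σ_0 = I, σ_1, σ_2, σ_3`. -/
noncomputable def pauli : Fin 4 → Matrix (Fin 2) (Fin 2) ℂ
  | 0 => 1
  | 1 => !![0, 1; 1, 0]
  | 2 => !![0, -Complex.I; Complex.I, 0]
  | 3 => !![1, 0; 0, -1]

/-- The tensor product `M_1 ⊗ M_2 ⊗ ⋯ ⊗ M_k` of `k` `2×2`-matrices, realized as a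
matrix acting on `(ℂ²)^{⊗k} ≅ ((Fin k → Fin 2) → ℂ)`. -/
noncomputable def tensorMx (k : ℕ) (M : Fin k → Matrix (Fin 2) (Fin 2) ℂ) :
    Matrix (Fin k → Fin 2) (Fin k → Fin 2) ℂ :=
  Matrix.of fun p q => ∏ j : Fin k, M j (p j) (q j)

/-- The matrix by which the Clifford generator `e_r` (one-based) acts on
`(ℂ²)^{⊗k}`: for `r = 2j−1`, `e_r ↦ i·σ_3^{⊗(j−1)} ⊗ σ_1 ⊗ σ_0^{⊗(k−j)}`, and for
`r = 2j`, `e_r ↦ i·σ_3^{⊗(j−1)} ⊗ σ_2 ⊗ σ_0^{⊗(k−j)}`; by convention `e_0 ↦ 0`. -/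
noncomputable def cliffMat (k : ℕ) (r : ℕ) :
    Matrix (Fin k → Fin 2) (Fin k → Fin 2) ℂ :=
  if r = 0 then 0
  else
    Complex.I • tensorMx k (fun s =>
      if (s : ℕ) < (r + 1) / 2 - 1 then pauli 3
      else if (s : ℕ) = (r + 1) / 2 - 1 then (if r % 2 = 1 then pauli 1 else pauli 2)
      else pauli 0)

/-- The generator `t_j` of `S̃_n` with one-based index `j ∈ {1, …, n−1}` (and the
value `1` for out-of-range indices). -/
def tElN (n : ℕ) (j : ℕ) : SpinSym n :=
  if h : 1 ≤ j ∧ j ≤ n - 1 then tEl (⟨j - 1, by omega⟩ : Fin (n - 1)) else 1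

/-- The cycle `[a+1, a+2, …, a+k] = z^{k-1} t_{a+1} t_{a+2} ⋯ t_{a+k-1} ∈ S̃_n` on a
block of `k` consecutive letters. -/
def consecCycle (n a k : ℕ) : SpinSym n :=
  zEl n ^ (k - 1) * ((List.range (k - 1)).map (fun s => tElN n (a + 1 + s))).prod

/-- The special element `t^λ ∈ S̃_n` attached to a partition `λ` (a list of parts):
the product of the cycles on consecutive blocks of sizes `λ_1, λ_2, …`. -/
def tPartition (n : ℕ) : ℕ → List ℕ → SpinSym n
  | _, [] => 1
  | a, k :: rest => consecCycle n a k * tPartition n (a + k) rest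

lemma tensorMx_mul (k : ℕ) (M N : Fin k → Matrix (Fin 2) (Fin 2) ℂ) :
    tensorMx k M * tensorMx k N = tensorMx k (fun j => M j * N j) := by
  ext p r
  simp only [tensorMx, Matrix.mul_apply, Matrix.of_apply, Fintype.prod_sum]
  simp [← Finset.prod_mul_distrib]

lemma tensorMx_one (k : ℕ) : tensorMx k (fun _ => 1) = 1 := by
  ext p q
  simp only [tensorMx, Matrix.of_apply, Matrix.one_apply]
  by_cases h : p = q
  · subst h; simp
  · rw [if_neg h]
    obtain ⟨j, hj⟩ := Function.ne_iff.mp h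
    exact Finset.prod_eq_zero (Finset.mem_univ j) (by simp [Matrix.one_apply, hj])

lemma tensorMx_expand (k : ℕ) (f : Fin k → Fin 4 → ℂ) :
    tensorMx k (fun j => ∑ c : Fin 4, f j c • pauli c) =
      ∑ a : Fin k → Fin 4, (∏ j, f j (a j)) • tensorMx k (fun j => pauli (a j)) := by
  ext p q
  simp only [tensorMx, Matrix.of_apply, Matrix.sum_apply, Matrix.smul_apply,
    smul_eq_mul, Fintype.prod_sum, Finset.prod_mul_distrib]

lemma tensorMx_ite_smul (k : ℕ) (j : Fin k) (c : ℂ) (M N : Fin k → Matrix (Fin 2) (Fin 2) ℂ) :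
    tensorMx k (fun s => if s = j then c • M s else N s) =
      c • tensorMx k (fun s => if s = j then M s else N s) := by
  ext p q
  simp only [tensorMx, Matrix.of_apply, Matrix.smul_apply, smul_eq_mul]
  have h1 : ∀ s ∈ Finset.univ.erase j,
      (if s = j then c • M s else N s) (p s) (q s) = N s (p s) (q s) := fun s hs => by
    rw [if_neg (Finset.ne_of_mem_erase hs)]
  have h2 : ∀ s ∈ Finset.univ.erase j,
      (if s = j then M s else N s) (p s) (q s) = N s (p s) (q s) := fun s hs => by
    rw [if_neg (Finset.ne_of_mem_erase hs)]
  rw [← Finset.mul_prod_erase _ _ (Finset.mem_univ j),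
    ← Finset.mul_prod_erase _ (fun s => (if s = j then M s else N s) (p s) (q s)) (Finset.mem_univ j),
    Finset.prod_congr rfl h1, Finset.prod_congr rfl h2, if_pos rfl, if_pos rfl]
  simp [mul_assoc]

lemma pauli_mul_12 : pauli 1 * pauli 2 = Complex.I • pauli 3 := by
  ext i j
  fin_cases i <;> fin_cases j <;>
    simp [pauli, Matrix.mul_apply, Fin.sum_univ_two, Matrix.one_apply]

lemma pauli_mul_33 : pauli 3 * pauli 3 = 1 := by
  ext i j
  fin_cases i <;> fin_cases j <;>
    simp [pauli, Matrix.mul_apply, Fin.sum_univ_two, Matrix.one_apply]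

lemma pauli_mul_31 : pauli 3 * pauli 1 = Complex.I • pauli 2 := by
  ext i j
  fin_cases i <;> fin_cases j <;>
    simp [pauli, Matrix.mul_apply, Fin.sum_univ_two, Matrix.one_apply]

lemma pauli_mul_32 : pauli 3 * pauli 2 = (-Complex.I) • pauli 1 := by
  ext i j
  fin_cases i <;> fin_cases j <;>
    simp [pauli, Matrix.mul_apply, Fin.sum_univ_two, Matrix.one_apply]

lemma unit_expand (a b : Fin 2) :
    Matrix.single a b (1 : ℂ) = ∑ c : Fin 4, (pauli c b a / 2) • pauli c := by
  ext i j
  fin_cases a <;> fin_cases b <;> fin_cases i <;> fin_cases j <;>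
    simp [pauli, Fin.sum_univ_four, Matrix.single, Matrix.one_apply] <;> ring_nf <;>
    simp [Complex.I_sq] <;> ring

noncomputable def presSub (k : ℕ) (W : Submodule ℂ ((Fin k → Fin 2) → ℂ)) :
    Submodule ℂ (Matrix (Fin k → Fin 2) (Fin k → Fin 2) ℂ) where
  carrier := {M | ∀ v ∈ W, M.mulVecLin v ∈ W}
  add_mem' := fun {a b} ha hb v hv => by
    rw [Matrix.mulVecLin_add, LinearMap.add_apply]
    exact W.add_mem (ha v hv) (hb v hv)
  zero_mem' := fun v hv => by rw [Matrix.mulVecLin_zero]; exact W.zero_mem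
  smul_mem' := fun c M hM v hv => by
    rw [Matrix.mulVecLin_apply, Matrix.smul_mulVec]
    exact W.smul_mem c (hM v hv)

lemma presSub_mul (k : ℕ) (W : Submodule ℂ ((Fin k → Fin 2) → ℂ))
    {M N : Matrix (Fin k → Fin 2) (Fin k → Fin 2) ℂ}
    (hM : M ∈ presSub k W) (hN : N ∈ presSub k W) : M * N ∈ presSub k W :=
  fun v hv => by
    rw [Matrix.mulVecLin_mul, LinearMap.comp_apply]
    exact hM _ (hN v hv)

lemma presSub_one (k : ℕ) (W : Submodule ℂ ((Fin k → Fin 2) → ℂ)) :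
    (1 : Matrix (Fin k → Fin 2) (Fin k → Fin 2) ℂ) ∈ presSub k W :=
  fun v hv => by rw [Matrix.mulVecLin_one]; exact hv

lemma pauli_zero : pauli 0 = 1 := rfl

lemma cliffMat_odd (k : ℕ) (j : Fin k) :
    cliffMat k (2 * (j : ℕ) + 1) = Complex.I • tensorMx k (fun s =>
      if (s : ℕ) < (j : ℕ) then pauli 3
      else if (s : ℕ) = (j : ℕ) then pauli 1 else 1) := by
  have h1 : (2 * (j : ℕ) + 1 + 1) / 2 - 1 = (j : ℕ) := by omega
  have h2 : (2 * (j : ℕ) + 1) % 2 = 1 := by omega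
  simp [cliffMat, h1, h2, pauli_zero]

lemma cliffMat_even (k : ℕ) (j : Fin k) :
    cliffMat k (2 * (j : ℕ) + 2) = Complex.I • tensorMx k (fun s =>
      if (s : ℕ) < (j : ℕ) then pauli 3
      else if (s : ℕ) = (j : ℕ) then pauli 2 else 1) := by
  have h1 : (2 * (j : ℕ) + 2 + 1) / 2 - 1 = (j : ℕ) := by omega
  have h2 : (2 * (j : ℕ) + 2) % 2 = 0 := by omega
  simp [cliffMat, h1, h2, pauli_zero]

lemma presSub_top (k : ℕ) (W : Submodule ℂ ((Fin k → Fin 2) → ℂ))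
    (hcl : ∀ r, 1 ≤ r → r ≤ 2 * k → cliffMat k r ∈ presSub k W) :
    ∀ M, M ∈ presSub k W := by
  set A := presSub k W with hA
  -- single-site σ3
  have hsite3 : ∀ j : Fin k, tensorMx k (fun s => if s = j then pauli 3 else 1) ∈ A := by
    intro j
    have hodd := hcl (2 * (j : ℕ) + 1) (by omega) (by have := j.isLt; omega)
    have heven := hcl (2 * (j : ℕ) + 2) (by omega) (by have := j.isLt; omega)
    have hmul := presSub_mul k W hodd heven
    have hcalc : cliffMat k (2 * (j : ℕ) + 1) * cliffMat k (2 * (j : ℕ) + 2) =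
        (-Complex.I) • tensorMx k (fun s => if s = j then pauli 3 else 1) := by
      rw [cliffMat_odd, cliffMat_even, Matrix.smul_mul, Matrix.mul_smul, tensorMx_mul,
        smul_smul]
      have hfun : (fun s : Fin k =>
          (if (s : ℕ) < (j : ℕ) then pauli 3 else if (s : ℕ) = (j : ℕ) then pauli 1 else 1) *
          (if (s : ℕ) < (j : ℕ) then pauli 3 else if (s : ℕ) = (j : ℕ) then pauli 2 else 1)) =
          (fun s : Fin k => if s = j then Complex.I • pauli 3 else (1 : Matrix (Fin 2) (Fin 2) ℂ)) := by
        funext s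
        rcases lt_trichotomy ((s : ℕ)) ((j : ℕ)) with h | h | h
        · have hne : s ≠ j := fun hc => by simp [hc] at h
          simp [h, hne, pauli_mul_33]
        · have he : s = j := Fin.ext h
          simp [he, pauli_mul_12]
        · have hne : s ≠ j := fun hc => by simp [hc] at h
          simp [Nat.lt_asymm h, (Nat.ne_of_lt h).symm, hne]
      rw [hfun, tensorMx_ite_smul k j Complex.I (fun _ => pauli 3) (fun _ => 1), smul_smul]
      congr 1
      simp [Complex.I_mul_I]
    rw [hcalc] at hmul
    have := A.smul_mem (Complex.I) hmul
    rwa [smul_smul, show Complex.I * -Complex.I = 1 by simp [Complex.I_mul_I], one_smul] at this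

  -- prefixes of σ3's
  have hZ : ∀ m, m ≤ k → tensorMx k (fun s => if (s : ℕ) < m then pauli 3 else 1) ∈ A := by
    intro m
    induction m with
    | zero =>
      intro _
      have : (fun s : Fin k => if (s : ℕ) < 0 then pauli 3 else 1) =
          (fun _ : Fin k => (1 : Matrix (Fin 2) (Fin 2) ℂ)) := by funext s; simp
      rw [this, tensorMx_one]
      exact presSub_one k W
    | succ m ih =>
      intro hm
      have h1 := ih (Nat.le_of_succ_le hm)
      have h2 := hsite3 ⟨m, hm⟩
      have hmul := presSub_mul k W h1 h2
      rw [tensorMx_mul] at hmul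
      have hfun : (fun s : Fin k =>
          (if (s : ℕ) < m then pauli 3 else 1) *
          (if s = (⟨m, hm⟩ : Fin k) then pauli 3 else 1)) =
          (fun s : Fin k => if (s : ℕ) < m + 1 then pauli 3 else 1) := by
        funext s
        rcases lt_trichotomy ((s : ℕ)) m with h | h | h
        · have hne : s ≠ (⟨m, hm⟩ : Fin k) := fun hc => by simp [hc] at h
          simp [h, hne, Nat.lt_succ_of_lt h]
        · have he : s = (⟨m, hm⟩ : Fin k) := Fin.ext h
          simp [he, h]
        · have hne : s ≠ (⟨m, hm⟩ : Fin k) := fun hc => by simp [hc] at h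
          have hn : ¬ ((s : ℕ) < m + 1) := by omega
          simp [Nat.lt_asymm h, hne, hn]
      rwa [hfun] at hmul
  -- all single sites
  have hsite : ∀ (j : Fin k) (c : Fin 4),
      tensorMx k (fun s => if s = j then pauli c else 1) ∈ A := by
    intro j c
    fin_cases c
    · show (tensorMx k fun s => if s = j then pauli 0 else 1) ∈ A
      have : (fun s : Fin k => if s = j then pauli 0 else 1) =
          (fun _ : Fin k => (1 : Matrix (Fin 2) (Fin 2) ℂ)) := by
        funext s; simp [pauli_zero]
      rw [this, tensorMx_one]; exact presSub_one k W
    · show (tensorMx k fun s => if s = j then pauli 1 else 1) ∈ A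
      have hZj := hZ (j : ℕ) (Nat.le_of_lt j.isLt)
      have hodd := hcl (2 * (j : ℕ) + 1) (by omega) (by have := j.isLt; omega)
      have hmul := presSub_mul k W hZj hodd
      rw [cliffMat_odd, Matrix.mul_smul, tensorMx_mul] at hmul
      have hfun : (fun s : Fin k =>
          (if (s : ℕ) < (j : ℕ) then pauli 3 else 1) *
          (if (s : ℕ) < (j : ℕ) then pauli 3 else if (s : ℕ) = (j : ℕ) then pauli 1 else 1)) =
          (fun s : Fin k => if s = j then pauli 1 else (1 : Matrix (Fin 2) (Fin 2) ℂ)) := by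
        funext s
        rcases lt_trichotomy ((s : ℕ)) ((j : ℕ)) with h | h | h
        · have hne : s ≠ j := fun hc => by simp [hc] at h
          simp [h, hne, pauli_mul_33]
        · have he : s = j := Fin.ext h
          simp [he]
        · have hne : s ≠ j := fun hc => by simp [hc] at h
          simp [Nat.lt_asymm h, (Nat.ne_of_lt h).symm, hne]
      rw [hfun] at hmul
      have := A.smul_mem (-Complex.I) hmul
      rwa [smul_smul, show -Complex.I * Complex.I = 1 by simp [Complex.I_mul_I], one_smul] at this
    · show (tensorMx k fun s => if s = j then pauli 2 else 1) ∈ A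
      have hZj := hZ (j : ℕ) (Nat.le_of_lt j.isLt)
      have heven := hcl (2 * (j : ℕ) + 2) (by omega) (by have := j.isLt; omega)
      have hmul := presSub_mul k W hZj heven
      rw [cliffMat_even, Matrix.mul_smul, tensorMx_mul] at hmul
      have hfun : (fun s : Fin k =>
          (if (s : ℕ) < (j : ℕ) then pauli 3 else 1) *
          (if (s : ℕ) < (j : ℕ) then pauli 3 else if (s : ℕ) = (j : ℕ) then pauli 2 else 1)) =
          (fun s : Fin k => if s = j then pauli 2 else (1 : Matrix (Fin 2) (Fin 2) ℂ)) := by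
        funext s
        rcases lt_trichotomy ((s : ℕ)) ((j : ℕ)) with h | h | h
        · have hne : s ≠ j := fun hc => by simp [hc] at h
          simp [h, hne, pauli_mul_33]
        · have he : s = j := Fin.ext h
          simp [he]
        · have hne : s ≠ j := fun hc => by simp [hc] at h
          simp [Nat.lt_asymm h, (Nat.ne_of_lt h).symm, hne]
      rw [hfun] at hmul
      have := A.smul_mem (-Complex.I) hmul
      rwa [smul_smul, show -Complex.I * Complex.I = 1 by simp [Complex.I_mul_I], one_smul] at this
    · show (tensorMx k fun s => if s = j then pauli 3 else 1) ∈ A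
      exact hsite3 j
  -- prefix products of arbitrary paulis
  have hpre : ∀ (a : Fin k → Fin 4) (m : ℕ), m ≤ k →
      tensorMx k (fun s => if (s : ℕ) < m then pauli (a s) else 1) ∈ A := by
    intro a m
    induction m with
    | zero =>
      intro _
      have : (fun s : Fin k => if (s : ℕ) < 0 then pauli (a s) else 1) =
          (fun _ : Fin k => (1 : Matrix (Fin 2) (Fin 2) ℂ)) := by funext s; simp
      rw [this, tensorMx_one]; exact presSub_one k W
    | succ m ih =>
      intro hm
      have h1 := ih (Nat.le_of_succ_le hm)
      have h2 := hsite ⟨m, hm⟩ (a ⟨m, hm⟩)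
      have hmul := presSub_mul k W h1 h2
      rw [tensorMx_mul] at hmul
      have hfun : (fun s : Fin k =>
          (if (s : ℕ) < m then pauli (a s) else 1) *
          (if s = (⟨m, hm⟩ : Fin k) then pauli (a ⟨m, hm⟩) else 1)) =
          (fun s : Fin k => if (s : ℕ) < m + 1 then pauli (a s) else 1) := by
        funext s
        rcases lt_trichotomy ((s : ℕ)) m with h | h | h
        · have hne : s ≠ (⟨m, hm⟩ : Fin k) := fun hc => by simp [hc] at h
          simp [h, hne, Nat.lt_succ_of_lt h]
        · have he : s = (⟨m, hm⟩ : Fin k) := Fin.ext h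
          simp [he, h]
        · have hne : s ≠ (⟨m, hm⟩ : Fin k) := fun hc => by simp [hc] at h
          have : ¬ ((s : ℕ) < m + 1) := by omega
          simp [Nat.lt_asymm h, hne, this]
      rwa [hfun] at hmul
  have htens : ∀ a : Fin k → Fin 4, tensorMx k (fun s => pauli (a s)) ∈ A := by
    intro a
    have := hpre a k le_rfl
    have heq : (fun s : Fin k => if (s : ℕ) < k then pauli (a s) else 1) =
        (fun s : Fin k => pauli (a s)) := by
      funext s; simp [s.isLt]
    rwa [heq] at this
  have hstd : ∀ p q : Fin k → Fin 2, Matrix.single p q (1 : ℂ) ∈ A := by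
    intro p q
    have h1 : Matrix.single p q (1 : ℂ) =
        tensorMx k (fun j => Matrix.single (p j) (q j) (1 : ℂ)) := by
      ext x y
      simp only [tensorMx, Matrix.of_apply, Matrix.single]
      by_cases h : p = x ∧ q = y
      · simp [h.1, h.2]
      · rw [if_neg h]
        have hex : ∃ j, ¬ (p j = x j ∧ q j = y j) := by
          by_contra hc
          push_neg at hc
          exact h ⟨funext fun j => (hc j).1, funext fun j => (hc j).2⟩
        obtain ⟨j, hj⟩ := hex
        symm
        refine Finset.prod_eq_zero (Finset.mem_univ j) ?_
        rw [if_neg hj]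
    rw [h1,
      show (fun j => Matrix.single (p j) (q j) (1 : ℂ)) =
        (fun j => ∑ c : Fin 4, (pauli c (q j) (p j) / 2) • pauli c) from
        funext fun j => unit_expand (p j) (q j),
      tensorMx_expand]
    exact Submodule.sum_mem _ fun a _ => Submodule.smul_mem _ _ (htens a)
  intro M
  rw [Matrix.matrix_eq_sum_single M]
  refine Submodule.sum_mem _ fun i _ => Submodule.sum_mem _ fun j _ => ?_
  rw [show Matrix.single i j (M i j) = M i j • Matrix.single i j (1 : ℂ) by
    rw [Matrix.smul_single, smul_eq_mul, mul_one]]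
  exact Submodule.smul_mem _ _ (hstd i j)

lemma clifford_irred (k : ℕ) (W : Submodule ℂ ((Fin k → Fin 2) → ℂ))
    (hcl : ∀ r, 1 ≤ r → r ≤ 2 * k → cliffMat k r ∈ presSub k W) :
    W = ⊥ ∨ W = ⊤ := by
  by_cases hbot : W = ⊥
  · exact Or.inl hbot
  right
  obtain ⟨v, hvW, hv0⟩ := (Submodule.ne_bot_iff W).mp hbot
  obtain ⟨p, hp⟩ := Function.ne_iff.mp hv0
  have hall := presSub_top k W hcl
  have hqW : ∀ q, Pi.single q (1 : ℂ) ∈ W := by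
    intro q
    have hm := hall (Matrix.single q p 1) v hvW
    have hvec : (Matrix.single q p (1 : ℂ)).mulVecLin v = v p • (Pi.single q (1:ℂ) : (Fin k → Fin 2) → ℂ) := by
      funext x
      simp only [Matrix.mulVecLin_apply, Matrix.mulVec, dotProduct,
        Matrix.single, Matrix.of_apply, Pi.smul_apply, Pi.single_apply, smul_eq_mul]
      by_cases hx : q = x
      · subst hx
        simp [ite_and]
      · simp [hx, Ne.symm hx, ite_and]
    rw [hvec] at hm
    have := W.smul_mem (v p)⁻¹ hm
    rwa [smul_smul, inv_mul_cancel₀ hp, one_smul] at this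
  rw [eq_top_iff]
  intro u _
  have hu : u = ∑ q, u q • (Pi.single q (1:ℂ) : (Fin k → Fin 2) → ℂ) := by
    funext x
    simp [Finset.sum_apply, Pi.single_apply]
  rw [hu]
  exact Submodule.sum_mem _ fun q _ => W.smul_mem _ (hqW q)


/-- `statement_12`: for every odd `n ≥ 1`, the basic spin representation `B_n` of
`S̃_n` on `(ℂ²)^{⊗(n−1)/2}` (with `B_n(z) = −Id` and
`B_n(t_j) = √((j+1)/(2j))·E_j − √((j−1)/(2j))·E_{j−1}`) is irreducible, of dimension
`2^{(n−1)/2}`. -/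
theorem statement_12 (n : ℕ) (hn : 1 ≤ n) (hodd : Odd n)
    (B : SpinSym n →* Matrix (Fin ((n - 1) / 2) → Fin 2) (Fin ((n - 1) / 2) → Fin 2) ℂ)
    (hBz : B (zEl n) = -1)
    (hBt : ∀ j : Fin (n - 1),
      B (tEl j) =
        ((Real.sqrt ((((j : ℕ) : ℝ) + 2) / (2 * (((j : ℕ) : ℝ) + 1))) : ℂ)) •
            cliffMat ((n - 1) / 2) ((j : ℕ) + 1) -
          ((Real.sqrt (((j : ℕ) : ℝ) / (2 * (((j : ℕ) : ℝ) + 1))) : ℂ)) •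
            cliffMat ((n - 1) / 2) (j : ℕ)) :
    (∀ W : Submodule ℂ ((Fin ((n - 1) / 2) → Fin 2) → ℂ),
      (∀ g : SpinSym n, ∀ v ∈ W, Matrix.mulVecLin (B g) v ∈ W) → W = ⊥ ∨ W = ⊤) ∧
    Module.finrank ℂ ((Fin ((n - 1) / 2) → Fin 2) → ℂ) = 2 ^ ((n - 1) / 2) := by
  constructor
  · intro W hW
    have h2k : 2 * ((n - 1) / 2) = n - 1 := by
      obtain ⟨m, hm⟩ := hodd; omega
    have key : ∀ r, r ≤ n - 1 → cliffMat ((n - 1) / 2) r ∈ presSub ((n - 1) / 2) W := by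
      intro r
      induction r with
      | zero =>
        intro _
        have h0 : cliffMat ((n - 1) / 2) 0 = 0 := by simp [cliffMat]
        rw [h0]
        exact (presSub ((n - 1) / 2) W).zero_mem
      | succ r ih =>
        intro hr
        have hj : r < n - 1 := by omega
        have hB := hBt ⟨r, hj⟩
        simp only [Fin.val_mk] at hB
        have hpos : (0 : ℝ) < ((r : ℝ) + 2) / (2 * ((r : ℝ) + 1)) := by positivity
        have ha : ((Real.sqrt (((r : ℝ) + 2) / (2 * ((r : ℝ) + 1))) : ℝ) : ℂ) ≠ 0 := by
          rw [Complex.ofReal_ne_zero]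
          exact ne_of_gt (Real.sqrt_pos.mpr hpos)
        have hBmem : B (tEl ⟨r, hj⟩) ∈ presSub ((n - 1) / 2) W := fun v hv => hW _ v hv
        have hEr : cliffMat ((n - 1) / 2) r ∈ presSub ((n - 1) / 2) W := ih (by omega)
        have heq : cliffMat ((n - 1) / 2) (r + 1) =
            (((Real.sqrt (((r : ℝ) + 2) / (2 * ((r : ℝ) + 1))) : ℝ) : ℂ))⁻¹ •
              (B (tEl ⟨r, hj⟩) +
                ((Real.sqrt ((r : ℝ) / (2 * ((r : ℝ) + 1))) : ℝ) : ℂ) •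
                  cliffMat ((n - 1) / 2) r) := by
          rw [hB, sub_add_cancel, smul_smul, inv_mul_cancel₀ ha, one_smul]
        rw [heq]
        exact Submodule.smul_mem _ _
          (Submodule.add_mem _ hBmem (Submodule.smul_mem _ _ hEr))
    exact clifford_irred ((n - 1) / 2) W (fun r h1 h2 => key r (by omega))
  · rw [Module.finrank_fintype_fun_eq_card]
    simp
end

section
/- Let Γ be a finite group, V a finite-dimensional complex Γ-module with character γ, and (U, π) a finite-dimensional complex representation of S̃_n with character χ_π. Make V^{⊗n} ⊗ U into a Γ̃_n-module by (g, t)·(v_1 ⊗ ⋯ ⊗ v_n ⊗ u) = g_1 v_{σ^{−1}(1)} ⊗ ⋯ ⊗ g_n v_{σ^{−1}(n)} ⊗ π(t)u, where g = (g_1, …, g_n) ∈ Γ^n, t ∈ S̃_n and σ = θ_n(t). Then the character of this Γ̃_n-module at (g, t) equals χ_π(t) · ∏_y γ(g_y), where the product runs over the cycles y of σ and g_y = g_{i_k} g_{i_{k−1}} ⋯ g_{i_1} is the cycle product of the cycle y = (i_1 i_2 ⋯ i_k). -/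
/-- The action of the symmetric group on `Γ^n` by permutation of the coordinates,
as a homomorphism into `MulAut (Fin n → Γ)`. -/
def permMulAut (n : ℕ) (Γ : Type) [Group Γ] :
    Equiv.Perm (Fin n) →* MulAut (Fin n → Γ) where
  toFun σ :=
    { toFun := fun g => g ∘ ⇑σ⁻¹
      invFun := fun g => g ∘ ⇑σ
      left_inv := fun g => by funext i; simp
      right_inv := fun g => by funext i; simp
      map_mul' := fun g h => rfl }
  map_one' := by ext g i; simp
  map_mul' := fun σ τ => by ext g i; simp

/-- The wreath product `Γ_n = Γ^n ⋊ S_n`. -/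
abbrev WreathPlain (n : ℕ) (Γ : Type) [Group Γ] : Type :=
  SemidirectProduct (Fin n → Γ) (Equiv.Perm (Fin n)) (permMulAut n Γ)

/-- The spin wreath product `Γ̃_n = Γ^n ⋊ S̃_n`, where `S̃_n` acts through
a homomorphism `θ : S̃_n → S_n`. -/
abbrev WreathSpin (n : ℕ) (Γ : Type) [Group Γ]
    (θ : SpinSym n →* Equiv.Perm (Fin n)) : Type :=
  SemidirectProduct (Fin n → Γ) (SpinSym n) ((permMulAut n Γ).comp θ)

/-- The covering map `Γ̃_n → Γ_n` (identity on `Γ^n`, `θ` on `S̃_n`). -/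
def coverMap (n : ℕ) (Γ : Type) [Group Γ] (θ : SpinSym n →* Equiv.Perm (Fin n)) :
    WreathSpin n Γ θ →* WreathPlain n Γ :=
  SemidirectProduct.map (MonoidHom.id _) θ (fun _ => rfl)

/-- The central element `z = (1, z) ∈ Γ̃_n`. -/
def zWreath (n : ℕ) (Γ : Type) [Group Γ] (θ : SpinSym n →* Equiv.Perm (Fin n)) :
    WreathSpin n Γ θ :=
  ⟨1, zEl n⟩

/-- The length of the `σ`-cycle through `a`. -/
noncomputable def cycLen {n : ℕ} (σ : Equiv.Perm (Fin n)) (a : Fin n) : ℕ :=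
  Function.minimalPeriod (⇑σ) a

/-- The cycle product `g_y = g_{σ^{k-1} a} ⋯ g_{σ a} g_a` of `x = (g, σ)`
corresponding to the cycle `y = (a, σ a, …, σ^{k-1} a)` through `a`. -/
noncomputable def cycProd {n : ℕ} {Γ : Type} [Group Γ] (g : Fin n → Γ) (σ : Equiv.Perm (Fin n))
    (a : Fin n) : Γ :=
  (((List.range (cycLen σ a)).reverse).map (fun j => g ((σ ^ j) a))).prod

open scoped Classical in
/-- The type of an element `(g, σ) ∈ Γ_n`: the partition-valued function on the set
`Γ_*` of conjugacy classes of `Γ` assigning to `c` the multiset of lengths of the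
cycles `y` of `σ` whose cycle product `g_y` lies in `c` (each cycle being counted
once, at its minimal point). -/
noncomputable def wreathType {n : ℕ} {Γ : Type} [Group Γ] (g : Fin n → Γ)
    (σ : Equiv.Perm (Fin n)) : ConjClasses Γ → Multiset ℕ := fun c =>
  ((Finset.univ.filter (fun a : Fin n =>
      (∀ b : Fin n, σ.SameCycle a b → a ≤ b) ∧
        ConjClasses.mk (cycProd g σ a) = c)).val).map (cycLen σ)

open scoped Classical in
/-- The total number `l(ρ)` of parts of a partition-valued function on `Γ_*`. -/
noncomputable def lenType {Γ : Type} [Group Γ] [Fintype Γ]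
    (ρ : ConjClasses Γ → Multiset ℕ) : ℕ :=
  ∑ c : ConjClasses Γ, Multiset.card (ρ c)

/-- The matrix by which `x = (g, t) ∈ Γ̃_n` acts on `V^{⊗n} ⊗ U`, where `V = ℂ^{dV}`
carries the `Γ`-representation `πΓ` and `U = ℂ^{dU}` carries the
`S̃_n`-representation `π`, via
`(g, t)·(v_1 ⊗ ⋯ ⊗ v_n ⊗ u) = g_1 v_{σ^{-1}(1)} ⊗ ⋯ ⊗ g_n v_{σ^{-1}(n)} ⊗ π(t)u`
with `σ = θ_n(t)`; `V^{⊗n} ⊗ U` is identified with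
`((Fin n → Fin dV) × Fin dU) → ℂ`. -/
noncomputable def wreathMat (n : ℕ) (Γ : Type) [Group Γ]
    (θ : SpinSym n →* Equiv.Perm (Fin n)) {dV dU : ℕ}
    (πΓ : Γ →* Matrix (Fin dV) (Fin dV) ℂ)
    (π : SpinSym n →* Matrix (Fin dU) (Fin dU) ℂ)
    (x : WreathSpin n Γ θ) :
    Matrix ((Fin n → Fin dV) × Fin dU) ((Fin n → Fin dV) × Fin dU) ℂ :=
  Matrix.of fun P Q =>
    (∏ i : Fin n, πΓ (x.left i) (P.1 i) (Q.1 ((θ x.right)⁻¹ i))) *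
      π x.right P.2 Q.2



namespace Spin14
variable {d : ℕ}

noncomputable def cEntry (A : ℕ → Matrix (Fin d) (Fin d) ℂ) : ℕ → Fin d → Fin d → ℂ
  | 0, x, y => if x = y then 1 else 0
  | (m+1), x, y => ∑ z, A m x z * cEntry A m z y

lemma snoc_bij {m : ℕ} : Function.Bijective
    (fun p : (Fin (m+1) → Fin d) × Fin d => (Fin.snoc p.1 p.2 : Fin (m+2) → Fin d)) := by
  constructor
  · intro a b h
    have h1 : a.1 = b.1 := by
      funext j; have := congrFun h j.castSucc; simpa using this
    have h2 : a.2 = b.2 := by have := congrFun h (Fin.last (m+1)); simpa using this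
    exact Prod.ext h1 h2
  · intro v
    refine ⟨⟨fun j => v j.castSucc, v (Fin.last (m+1))⟩, ?_⟩
    funext j; refine Fin.lastCases ?_ ?_ j <;> simp

lemma cEntry_eq_sum (A : ℕ → Matrix (Fin d) (Fin d) ℂ) :
    ∀ m (x y : Fin d), cEntry A m x y =
      ∑ v : Fin (m + 1) → Fin d,
        if v 0 = y ∧ v (Fin.last m) = x then
          ∏ j : Fin m, A j (v j.succ) (v j.castSucc) else 0 := by
  intro m
  induction m with
  | zero =>
    intro x y
    have hbij : Function.Bijective (fun z : Fin d => (fun _ => z : Fin 1 → Fin d)) := by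
      constructor
      · intro a b h; exact congrFun h 0
      · intro v; exact ⟨v 0, by funext j; simp [Subsingleton.elim j 0]⟩
    rw [← Fintype.sum_bijective _ hbij _ _ (fun z => rfl)]
    have h1 : ∀ z : Fin d,
        (if (fun _ => z : Fin 1 → Fin d) 0 = y ∧ (fun _ => z : Fin 1 → Fin d) (Fin.last 0) = x then
          ∏ j : Fin 0, A j ((fun _ => z : Fin 1 → Fin d) j.succ)
            ((fun _ => z : Fin 1 → Fin d) j.castSucc) else 0)
        = if y = z then (if x = z then (1:ℂ) else 0) else 0 := by
      intro z
      by_cases hzy : y = z <;> by_cases hzx : x = z <;> simp [hzy, hzx, eq_comm]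
    rw [Finset.sum_congr rfl (fun z _ => h1 z), Finset.sum_ite_eq]
    simp [cEntry]
  | succ m ih =>
    intro x y
    rw [← Fintype.sum_bijective _ snoc_bij _ _ (fun p => rfl)]
    have key : ∀ (v : Fin (m+1) → Fin d) (z : Fin d),
        (if (Fin.snoc v z : Fin (m+2) → Fin d) 0 = y ∧
            (Fin.snoc v z : Fin (m+2) → Fin d) (Fin.last (m+1)) = x then
          ∏ j : Fin (m+1), A j ((Fin.snoc v z : Fin (m+2) → Fin d) j.succ)
            ((Fin.snoc v z : Fin (m+2) → Fin d) j.castSucc) else 0)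
        = if z = x then A m z (v (Fin.last m)) *
            (if v 0 = y ∧ v (Fin.last m) = v (Fin.last m) then
              ∏ j : Fin m, A j (v j.succ) (v j.castSucc) else 0) else 0 := by
      intro v z
      have h0 : (Fin.snoc v z : Fin (m+2) → Fin d) 0 = v 0 := by
        rw [show (0 : Fin (m+2)) = Fin.castSucc 0 by simp]; rw [Fin.snoc_castSucc]
      have hlast : (Fin.snoc v z : Fin (m+2) → Fin d) (Fin.last (m+1)) = z := Fin.snoc_last _ _
      rw [Fin.prod_univ_castSucc, h0, hlast]
      have hfac : ∀ j : Fin m,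
          A (j.castSucc) ((Fin.snoc v z : Fin (m+2) → Fin d) j.castSucc.succ)
            ((Fin.snoc v z : Fin (m+2) → Fin d) j.castSucc.castSucc)
          = A j (v j.succ) (v j.castSucc) := by
        intro j
        rw [Fin.succ_castSucc, Fin.snoc_castSucc, Fin.snoc_castSucc, Fin.coe_castSucc]
      rw [Finset.prod_congr rfl (fun j _ => hfac j)]
      have htop : A ((Fin.last m : Fin (m+1)) : ℕ)
            ((Fin.snoc v z : Fin (m+2) → Fin d) (Fin.last m).succ)
            ((Fin.snoc v z : Fin (m+2) → Fin d) (Fin.last m).castSucc)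
          = A m z (v (Fin.last m)) := by
        rw [Fin.succ_last, Fin.snoc_last, Fin.snoc_castSucc, Fin.val_last]
      rw [htop]
      by_cases h1 : v 0 = y <;> by_cases h2 : z = x <;> simp [h1, h2, mul_comm]
    rw [Finset.sum_congr rfl (fun p _ => key p.1 p.2), Fintype.sum_prod_type]
    have hz : ∀ v : Fin (m+1) → Fin d,
        (∑ z, if z = x then A m z (v (Fin.last m)) *
            (if v 0 = y ∧ v (Fin.last m) = v (Fin.last m) then
              ∏ j : Fin m, A j (v j.succ) (v j.castSucc) else 0) else 0)
        = A m x (v (Fin.last m)) *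
            (if v 0 = y then ∏ j : Fin m, A j (v j.succ) (v j.castSucc) else 0) := by
      intro v
      rw [Finset.sum_ite_eq' Finset.univ x]
      simp
    rw [Finset.sum_congr rfl (fun v _ => hz v)]
    show (∑ z, A m x z * cEntry A m z y) = _
    have hexp : ∀ z, A m x z * cEntry A m z y
        = ∑ v : Fin (m+1) → Fin d, A m x z *
            (if v 0 = y ∧ v (Fin.last m) = z then
              ∏ j : Fin m, A j (v j.succ) (v j.castSucc) else 0) :=
      fun z => by rw [ih z y, Finset.mul_sum]
    rw [Finset.sum_congr rfl (fun z _ => hexp z), Finset.sum_comm]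
    refine Finset.sum_congr rfl (fun v _ => ?_)
    have hcol : ∀ z, A m x z *
        (if v 0 = y ∧ v (Fin.last m) = z then
          ∏ j : Fin m, A j (v j.succ) (v j.castSucc) else 0)
        = if v (Fin.last m) = z then
            (if v 0 = y then A m x z * ∏ j : Fin m, A j (v j.succ) (v j.castSucc) else 0)
          else 0 := by
      intro z; by_cases h1 : v (Fin.last m) = z <;> by_cases h2 : v 0 = y <;> simp [h1, h2]
    rw [Finset.sum_congr rfl (fun z _ => hcol z), Finset.sum_ite_eq]
    by_cases h2 : v 0 = y <;> simp [h2, mul_comm]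

end Spin14

namespace Spin14
variable {d : ℕ}

/-- Cyclic predecessor in `Fin (m+1)`. -/
def predF {m : ℕ} (j : Fin (m + 1)) : Fin (m + 1) :=
  if (j : ℕ) = 0 then Fin.last m else ⟨(j : ℕ) - 1, by omega⟩

noncomputable def Emat (A : ℕ → Matrix (Fin d) (Fin d) ℂ) (k : ℕ) :
    Matrix (Fin d) (Fin d) ℂ :=
  (((List.range k).reverse).map A).prod

lemma Emat_succ (A : ℕ → Matrix (Fin d) (Fin d) ℂ) (k : ℕ) :
    Emat A (k + 1) = A k * Emat A k := by
  simp [Emat, List.range_succ]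

lemma Emat_apply (A : ℕ → Matrix (Fin d) (Fin d) ℂ) :
    ∀ m x y, Emat A m x y = cEntry A m x y := by
  intro m
  induction m with
  | zero => intro x y; simp [Emat, cEntry, Matrix.one_apply]
  | succ m ih =>
    intro x y
    rw [Emat_succ, Matrix.mul_apply]
    simp [cEntry, ih]

lemma cons_bij {m : ℕ} : Function.Bijective
    (fun p : Fin d × (Fin (m+1) → Fin d) => (Fin.cons p.1 p.2 : Fin (m+2) → Fin d)) := by
  constructor
  · intro a b h
    refine Prod.ext ?_ ?_
    · have := congrFun h 0; simpa using this
    · funext j; have := congrFun h j.succ; simpa using this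
  · intro v
    refine ⟨⟨v 0, fun j => v j.succ⟩, ?_⟩
    funext j; refine Fin.cases ?_ ?_ j <;> simp

lemma trace_Emat_eq_cyclic (A : ℕ → Matrix (Fin d) (Fin d) ℂ) (m : ℕ) :
    Matrix.trace (Emat A (m + 1)) =
      ∑ w : Fin (m + 1) → Fin d, ∏ j : Fin (m + 1), A j (w j) (w (predF j)) := by
  rw [Matrix.trace]
  have h1 : ∀ x : Fin d, Matrix.diag (Emat A (m+1)) x =
      ∑ v : Fin (m + 2) → Fin d,
        if v 0 = x ∧ v (Fin.last (m+1)) = x then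
          ∏ j : Fin (m+1), A j (v j.succ) (v j.castSucc) else 0 := by
    intro x
    rw [Matrix.diag, Emat_apply, cEntry_eq_sum]
  rw [Finset.sum_congr rfl (fun x _ => h1 x), Finset.sum_comm]
  have h2 : ∀ v : Fin (m + 2) → Fin d,
      (∑ x : Fin d, if v 0 = x ∧ v (Fin.last (m+1)) = x then
          ∏ j : Fin (m+1), A j (v j.succ) (v j.castSucc) else 0)
      = if v (Fin.last (m+1)) = v 0 then
          ∏ j : Fin (m+1), A j (v j.succ) (v j.castSucc) else 0 := by
    intro v
    have : ∀ x : Fin d, (if v 0 = x ∧ v (Fin.last (m+1)) = x then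
          (∏ j : Fin (m+1), A j (v j.succ) (v j.castSucc)) else 0)
        = if v 0 = x then (if v (Fin.last (m+1)) = x then
            (∏ j : Fin (m+1), A j (v j.succ) (v j.castSucc)) else 0) else 0 := by
      intro x; by_cases hx : v 0 = x <;> simp [hx]
    rw [Finset.sum_congr rfl (fun x _ => this x), Finset.sum_ite_eq]
    simp
  rw [Finset.sum_congr rfl (fun v _ => h2 v),
    ← Fintype.sum_bijective _ cons_bij _ _ (fun p => rfl), Fintype.sum_prod_type_right]
  refine Finset.sum_congr rfl (fun w _ => ?_)
  have hlast : ∀ x0 : Fin d, (Fin.cons x0 w : Fin (m+2) → Fin d) (Fin.last (m+1)) =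
      w (Fin.last m) := by
    intro x0
    rw [← Fin.succ_last, Fin.cons_succ]
  have hterm : ∀ x0 : Fin d,
      (if (Fin.cons x0 w : Fin (m+2) → Fin d) (Fin.last (m+1)) =
          (Fin.cons x0 w : Fin (m+2) → Fin d) 0 then
        ∏ j : Fin (m+1), A j ((Fin.cons x0 w : Fin (m+2) → Fin d) j.succ)
          ((Fin.cons x0 w : Fin (m+2) → Fin d) j.castSucc) else 0)
      = if w (Fin.last m) = x0 then
          ∏ j : Fin (m+1), A j (w j) ((Fin.cons x0 w : Fin (m+2) → Fin d) j.castSucc)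
        else 0 := by
    intro x0
    rw [hlast, Fin.cons_zero]
    simp only [Fin.cons_succ]
  rw [Finset.sum_congr rfl (fun x0 _ => hterm x0), Finset.sum_ite_eq]
  simp only [Finset.mem_univ, if_true]
  refine Finset.prod_congr rfl (fun j _ => ?_)
  congr 1
  by_cases hj : (j : ℕ) = 0
  · have hj0 : j = 0 := Fin.ext hj
    subst hj0
    rw [show (Fin.castSucc (0 : Fin (m+1))) = 0 from rfl, Fin.cons_zero, predF]
    simp
  · have : j.castSucc = (⟨(j : ℕ) - 1, by omega⟩ : Fin (m+1)).succ := by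
      apply Fin.ext
      simp [Fin.val_succ]
      omega
    rw [this, Fin.cons_succ, predF]
    simp [hj]

end Spin14

namespace Spin14
open scoped Classical
open scoped Classical

variable {n : ℕ} (σ : Equiv.Perm (Fin n))

noncomputable def repMin (i : Fin n) : Fin n :=
  (Finset.univ.filter (fun b => σ.SameCycle i b)).min'
    ⟨i, Finset.mem_filter.2 ⟨Finset.mem_univ i, Equiv.Perm.SameCycle.refl σ i⟩⟩

lemma sameCycle_repMin (i : Fin n) : σ.SameCycle i (repMin σ i) := by
  have := (Finset.univ.filter (fun b => σ.SameCycle i b)).min'_mem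
    ⟨i, Finset.mem_filter.2 ⟨Finset.mem_univ i, Equiv.Perm.SameCycle.refl σ i⟩⟩
  exact (Finset.mem_filter.1 this).2

lemma repMin_le {i b : Fin n} (h : σ.SameCycle (repMin σ i) b) : repMin σ i ≤ b := by
  apply Finset.min'_le
  exact Finset.mem_filter.2 ⟨Finset.mem_univ b, (sameCycle_repMin σ i).trans h⟩

lemma repMin_eq_of_sameCycle {i j : Fin n} (h : σ.SameCycle i j) :
    repMin σ i = repMin σ j := by
  unfold repMin
  congr 1
  ext b
  simp only [Finset.mem_filter, Finset.mem_univ, true_and]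
  exact ⟨fun hb => h.symm.trans hb, fun hb => h.trans hb⟩

lemma repMin_min (i : Fin n) : ∀ b, σ.SameCycle (repMin σ i) b → repMin σ i ≤ b :=
  fun _ h => repMin_le σ h

lemma repMin_eq_self {a : Fin n} (ha : ∀ b, σ.SameCycle a b → a ≤ b) :
    repMin σ a = a := by
  refine le_antisymm ?_ (ha _ (sameCycle_repMin σ a))
  apply Finset.min'_le
  exact Finset.mem_filter.2 ⟨Finset.mem_univ a, Equiv.Perm.SameCycle.refl σ a⟩

lemma cycLen_pos (a : Fin n) : 0 < cycLen σ a := by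
  rw [cycLen, Function.minimalPeriod_pos_iff_mem_periodicPts]
  refine ⟨orderOf σ, orderOf_pos σ, ?_⟩
  show (⇑σ)^[orderOf σ] a = a
  rw [Equiv.Perm.iterate_eq_pow, pow_orderOf_eq_one]
  rfl

lemma pow_cycLen (a : Fin n) : (σ ^ (cycLen σ a)) a = a := by
  have := Function.iterate_minimalPeriod (f := ⇑σ) (x := a)
  rwa [Equiv.Perm.iterate_eq_pow] at this

lemma orbit_bij {a : Fin n} (ha : ∀ b, σ.SameCycle a b → a ≤ b) :
    Function.Bijective (fun j : Fin (cycLen σ a) =>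
      (⟨(σ ^ (j : ℕ)) a, by
        rw [repMin_eq_of_sameCycle σ (j := a) ⟨-(j:ℤ), by simp [zpow_natCast]⟩]
        exact repMin_eq_self σ ha⟩ :
        {i // repMin σ i = a})) := by
  constructor
  · intro j1 j2 h
    have h' : (⇑σ)^[(j1 : ℕ)] a = (⇑σ)^[(j2 : ℕ)] a := by
      simpa [Equiv.Perm.iterate_eq_pow] using congrArg Subtype.val h
    have := Function.iterate_injOn_Iio_minimalPeriod (f := ⇑σ) (x := a)
      (Set.mem_Iio.2 j1.isLt) (Set.mem_Iio.2 j2.isLt) h'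
    exact Fin.ext this
  · rintro ⟨i, hi⟩
    have hcy : σ.SameCycle a i := by
      have h1 : σ.SameCycle i (repMin σ i) := sameCycle_repMin σ i
      rw [hi] at h1
      exact h1.symm
    obtain ⟨m, hm, hma⟩ := hcy.exists_pow_eq'
    refine ⟨⟨m % cycLen σ a, Nat.mod_lt _ (cycLen_pos σ a)⟩, ?_⟩
    apply Subtype.ext
    show (σ ^ (m % cycLen σ a)) a = i
    have := Function.iterate_mod_minimalPeriod_eq (f := ⇑σ) (x := a) (n := m)
    rw [Equiv.Perm.iterate_eq_pow, Equiv.Perm.iterate_eq_pow] at this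
    rw [show cycLen σ a = Function.minimalPeriod (⇑σ) a from rfl, this]
    exact hma

end Spin14

namespace Spin14
open scoped Classical
variable {d : ℕ}
lemma fiber_shift (σ : Equiv.Perm (Fin n)) {b : Fin n} (p : {i // repMin σ i = b}) :
    repMin σ (σ⁻¹ (p.1 : Fin n)) = b :=
  (repMin_eq_of_sameCycle σ ⟨1, by simp⟩).trans p.2


lemma apply_rep (σ : Equiv.Perm (Fin n)) (h : (b : Fin n) → ({i // repMin σ i = b} → Fin d))
    (j c : Fin n) (hc : repMin σ j = c) :
    h (repMin σ j) ⟨j, rfl⟩ = h c ⟨j, hc⟩ := by subst hc; rfl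

noncomputable def splitEquiv (σ : Equiv.Perm (Fin n)) :
    ((b : Fin n) → ({i // repMin σ i = b} → Fin d)) ≃ (Fin n → Fin d) where
  toFun h i := h (repMin σ i) ⟨i, rfl⟩
  invFun f b p := f p.1
  left_inv h := by
    funext b p
    obtain ⟨i, hi⟩ := p
    subst hi
    rfl
  right_inv f := rfl

lemma shift_pow (σ : Equiv.Perm (Fin n)) {a : Fin n} {m : ℕ} (hm : cycLen σ a = m + 1)
    (j : Fin (m + 1)) :
    σ⁻¹ ((σ ^ (j : ℕ)) a) = (σ ^ ((predF j : ℕ))) a := by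
  rw [Equiv.Perm.inv_eq_iff_eq]
  show _ = (σ * σ ^ ((predF j : ℕ))) a
  rw [← pow_succ']
  by_cases hj : (j : ℕ) = 0
  · rw [hj, predF]
    simp only [hj, if_true, pow_zero, Fin.val_last]
    rw [← hm, pow_cycLen]
    rfl
  · rw [predF]
    simp only [hj, if_false]
    congr 2
    omega

lemma cycle_sum (σ : Equiv.Perm (Fin n)) {a : Fin n} (ha : ∀ b, σ.SameCycle a b → a ≤ b)
    (M : Fin n → Matrix (Fin d) (Fin d) ℂ) :
    (∑ w : {i // repMin σ i = a} → Fin d, ∏ p : {i // repMin σ i = a},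
        M p.1 (w p) (w ⟨σ⁻¹ p.1, fiber_shift σ p⟩))
    = Matrix.trace (Emat (fun j => M ((σ ^ j) a)) (cycLen σ a)) := by
  obtain ⟨m, hm⟩ : ∃ m, cycLen σ a = m + 1 :=
    ⟨cycLen σ a - 1, by have := cycLen_pos σ a; omega⟩
  rw [hm, trace_Emat_eq_cyclic]
  set eb : Fin (m + 1) ≃ {i // repMin σ i = a} :=
    (finCongr hm.symm).trans (Equiv.ofBijective _ (orbit_bij σ ha)) with heb
  have heb1 : ∀ j : Fin (m + 1), ((eb j : {i // repMin σ i = a}) : Fin n) = (σ ^ (j : ℕ)) a :=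
    fun j => rfl
  refine Fintype.sum_equiv (eb.arrowCongr (Equiv.refl (Fin d))).symm _ _ (fun w => ?_)
  rw [← Equiv.prod_comp eb]
  refine Finset.prod_congr rfl (fun j _ => ?_)
  have harr : ∀ q, (eb.arrowCongr (Equiv.refl (Fin d))).symm w (eb.symm q) = w q := by
    intro q; simp [Equiv.arrowCongr]
  have h1 : ((eb.arrowCongr (Equiv.refl (Fin d))).symm w) j = w (eb j) := by
    rw [← harr (eb j), Equiv.symm_apply_apply]
  have h2 : ((eb.arrowCongr (Equiv.refl (Fin d))).symm w) (predF j) = w (eb (predF j)) := by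
    rw [← harr (eb (predF j)), Equiv.symm_apply_apply]
  rw [h1, h2]
  have hsub : (⟨σ⁻¹ ((eb j : {i // repMin σ i = a}) : Fin n), fiber_shift σ (eb j)⟩ :
      {i // repMin σ i = a}) = eb (predF j) := by
    apply Subtype.ext
    show σ⁻¹ ((eb j : {i // repMin σ i = a}) : Fin n) = _
    rw [heb1 j, heb1 (predF j)]
    exact shift_pow σ hm j
  rw [hsub]
  rfl

lemma key (σ : Equiv.Perm (Fin n)) (M : Fin n → Matrix (Fin d) (Fin d) ℂ) :
    ∑ f : Fin n → Fin d, ∏ i, M i (f i) (f (σ⁻¹ i)) =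
    ∏ a ∈ Finset.univ.filter (fun a : Fin n => ∀ b, σ.SameCycle a b → a ≤ b),
      Matrix.trace (Emat (fun j => M ((σ ^ j) a)) (cycLen σ a)) := by
  classical
  -- reindex the sum by splitEquiv
  rw [← Equiv.sum_comp (splitEquiv (σ := σ) (d := d))]
  -- rewrite each summand as a product over fibers
  have hsummand : ∀ h : (b : Fin n) → ({i // repMin σ i = b} → Fin d),
      (∏ i, M i (splitEquiv σ h i) (splitEquiv σ h (σ⁻¹ i)))
      = ∏ b : Fin n, ∏ p : {i // repMin σ i = b},
          M p.1 (h b p) (h b ⟨σ⁻¹ p.1, fiber_shift σ p⟩) := by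
    intro h
    rw [← Equiv.prod_comp (Equiv.sigmaFiberEquiv (repMin σ)), ← Finset.univ_sigma_univ,
      Finset.prod_sigma]
    refine Finset.prod_congr rfl (fun b _ => Finset.prod_congr rfl (fun p _ => ?_))
    obtain ⟨i, hi⟩ := p
    subst hi
    show M i (splitEquiv σ h i) (splitEquiv σ h (σ⁻¹ i)) = _
    rw [show splitEquiv σ h (σ⁻¹ i) = h (repMin σ i)
        ⟨σ⁻¹ i, fiber_shift σ (⟨i, rfl⟩ : {j // repMin σ j = repMin σ i})⟩ from
      apply_rep σ h (σ⁻¹ i) (repMin σ i) _]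
    rfl
  rw [Finset.sum_congr rfl (fun h _ => hsummand h)]
  -- exchange sum and product
  rw [show (∑ h : (b : Fin n) → ({i // repMin σ i = b} → Fin d),
        ∏ b : Fin n, ∏ p : {i // repMin σ i = b},
          M p.1 (h b p) (h b ⟨σ⁻¹ p.1, fiber_shift σ p⟩))
      = ∏ b : Fin n, ∑ w : {i // repMin σ i = b} → Fin d,
          ∏ p : {i // repMin σ i = b},
            M p.1 (w p) (w ⟨σ⁻¹ p.1, fiber_shift σ p⟩) from ?_]
  · rw [← Finset.prod_filter_mul_prod_filter_not Finset.univ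
      (fun a : Fin n => ∀ b, σ.SameCycle a b → a ≤ b)]
    have h1 : ∀ b ∈ Finset.univ.filter
        (fun a : Fin n => ¬ ∀ c, σ.SameCycle a c → a ≤ c),
        (∑ w : {i // repMin σ i = b} → Fin d, ∏ p : {i // repMin σ i = b},
          M p.1 (w p) (w ⟨σ⁻¹ p.1, fiber_shift σ p⟩)) = 1 := by
      intro b hb
      have hb' := (Finset.mem_filter.1 hb).2
      haveI : IsEmpty {i // repMin σ i = b} :=
        ⟨fun p => hb' (p.2 ▸ repMin_min σ p.1)⟩
      have : ∀ w : {i // repMin σ i = b} → Fin d,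
          (∏ p : {i // repMin σ i = b},
            M p.1 (w p) (w ⟨σ⁻¹ p.1, fiber_shift σ p⟩)) = 1 := by
        intro w
        rw [Finset.univ_eq_empty, Finset.prod_empty]
      rw [Finset.sum_congr rfl (fun w _ => this w), Finset.sum_const]
      simp [Fintype.card_fun]
    rw [Finset.prod_eq_one h1, mul_one]
    refine Finset.prod_congr rfl (fun a haa => ?_)
    exact cycle_sum σ (Finset.mem_filter.1 haa).2 M
  · rw [Finset.prod_univ_sum, Fintype.piFinset_univ]
end Spin14

open scoped Classical in
/-- `statement_14`: the character of the `Γ̃_n`-module `V^{⊗n} ⊗ U` at `(g, t)` equals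
`χ_π(t) · ∏_y γ(g_y)`, the product running over the cycles `y` of `σ = θ_n(t)` (one
representative, the minimal point, per cycle), where `γ` is the character of `V` and
`g_y` is the cycle product. -/
theorem statement_14 (n : ℕ) (Γ : Type) [Group Γ]
    (θ : SpinSym n →* Equiv.Perm (Fin n))
    (hθt : ∀ i : Fin (n - 1), θ (tEl i) = adjSwap n i)
    (hθz : θ (zEl n) = 1)
    (dV dU : ℕ)
    (πΓ : Γ →* Matrix (Fin dV) (Fin dV) ℂ)
    (π : SpinSym n →* Matrix (Fin dU) (Fin dU) ℂ)
    (x : WreathSpin n Γ θ) :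
    Matrix.trace (wreathMat n Γ θ πΓ π x) =
      Matrix.trace (π x.right) *
        ∏ a ∈ Finset.univ.filter
            (fun a : Fin n => ∀ b : Fin n, (θ x.right).SameCycle a b → a ≤ b),
          Matrix.trace (πΓ (cycProd x.left (θ x.right) a)) := by
  classical
  set σ := θ x.right with hσ
  set g := x.left with hg
  have htr : Matrix.trace (wreathMat n Γ θ πΓ π x)
      = ∑ f : Fin n → Fin dV, ∑ u : Fin dU,
          (∏ i, πΓ (g i) (f i) (f (σ⁻¹ i))) * π x.right u u := by
    rw [Matrix.trace, Fintype.sum_prod_type]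
    rfl
  rw [htr]
  have h2 : ∀ f : Fin n → Fin dV,
      (∑ u : Fin dU, (∏ i, πΓ (g i) (f i) (f (σ⁻¹ i))) * π x.right u u)
      = (∏ i, πΓ (g i) (f i) (f (σ⁻¹ i))) * Matrix.trace (π x.right) := by
    intro f; rw [← Finset.mul_sum]; rfl
  rw [Finset.sum_congr rfl (fun f _ => h2 f), ← Finset.sum_mul,
    Spin14.key σ (fun i => πΓ (g i)), mul_comm]
  congr 1
  refine Finset.prod_congr rfl (fun a _ => ?_)
  congr 1
  rw [cycProd, map_list_prod, List.map_map]
  rfl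
end
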